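/- arXiv:2311.05066 — 7 statements merged into one kernel-verified Lean document; each statement's English description precedes it below -/
import Mathlib

section
/- Let l, s, t be positive integers, let G be a graph containing neither K_{t+1} as a subgraph nor K_{t,t} as an induced subgraph, and let (S, L_0) be an (s, l + t^t·s^{t^t})-cluster in G. Then there exists a subfamily L of L_0 with |L| = l such that (S, L) is a t^t-meager (s, l)-cluster in G. -/
open scoped Classical

/-- `l` is the vertex sequence of an induced path in `G`: nonempty, without
repetitions, and two entries are adjacent iff they are consecutive. -/
def IsPathList {V : Type} (G : SimpleGraph V) (l : List V) : Prop :=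
  l ≠ [] ∧ l.Nodup ∧ ∀ i j : Fin l.length,
    (G.Adj (l.get i) (l.get j) ↔ (i.1 + 1 = j.1 ∨ j.1 + 1 = i.1))

/-- `G` contains an induced copy of `H`. -/
def ContainsInduced {V W : Type} (G : SimpleGraph V) (H : SimpleGraph W) : Prop :=
  ∃ f : W → V, Function.Injective f ∧ ∀ a b : W, H.Adj a b ↔ G.Adj (f a) (f b)

/-- `(S, L)` is an `(s,l)`-cluster in `G`: `S` has `s` vertices, `L` is a family
of `l` pairwise disjoint and anticomplete induced paths in `G − S`, and every
vertex of `S` has a neighbor in each path of `L`. -/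
def IsCluster {V : Type} (G : SimpleGraph V) (s l : ℕ)
    (S : Finset V) (L : Finset (List V)) : Prop :=
  S.card = s ∧ L.card = l ∧
  (∀ P ∈ L, IsPathList G P ∧ ∀ v ∈ P, v ∉ S) ∧
  (∀ P ∈ L, ∀ Q ∈ L, P ≠ Q → ∀ u ∈ P, ∀ v ∈ Q, u ≠ v ∧ ¬ G.Adj u v) ∧
  (∀ x ∈ S, ∀ P ∈ L, ∃ v ∈ P, G.Adj x v)

/-- The cluster `(S, L)` is `d`-meager: every vertex lying on a path of `L`
has fewer than `d` neighbors in `S`. -/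
def IsMeager {V : Type} (G : SimpleGraph V) (d : ℕ)
    (S : Finset V) (L : Finset (List V)) : Prop :=
  ∀ P ∈ L, ∀ v ∈ P, (S.filter (fun y => G.Adj v y)).card < d


lemma myEnum {α : Type} (n : ℕ) (C : Finset α) (h : C.card = n) :
    ∃ g : Fin n → α, Function.Injective g ∧ ∀ i, g i ∈ C := by
  refine ⟨fun i => (C.equivFin.symm (finCongr h.symm i) : α), ?_, fun i => ?_⟩
  · intro i j hij
    have := C.equivFin.symm.injective (Subtype.ext hij)
    exact (finCongr h.symm).injective this
  · exact (C.equivFin.symm (finCongr h.symm i)).2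


lemma noCliqueTest {V : Type} (G : SimpleGraph V) (t : ℕ)
    (hK : ¬ ContainsInduced G (⊤ : SimpleGraph (Fin (t + 1))))
    (C : Finset V) (hCc : C.card = t + 1)
    (hCadj : ∀ x ∈ C, ∀ y ∈ C, x ≠ y → G.Adj x y) : False := by
  obtain ⟨g, hginj, hgmem⟩ := myEnum (t + 1) C hCc
  apply hK
  refine ⟨g, hginj, fun a b => ?_⟩
  simp only [SimpleGraph.top_adj]
  constructor
  · intro hab
    exact hCadj _ (hgmem a) _ (hgmem b) (fun h => hab (hginj h))
  · intro hadj h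
    subst h
    exact G.irrefl hadj

lemma noBipTest {V : Type} (G : SimpleGraph V) (t : ℕ)
    (hKtt : ¬ ContainsInduced G (completeBipartiteGraph (Fin t) (Fin t)))
    (p q : Fin t → V)
    (hp : Function.Injective p) (hq : Function.Injective q)
    (hpq : ∀ i j, p i ≠ q j)
    (hpind : ∀ i j, i ≠ j → ¬ G.Adj (p i) (p j))
    (hqind : ∀ i j, i ≠ j → ¬ G.Adj (q i) (q j))
    (hadj : ∀ i j, G.Adj (p i) (q j)) : False := by
  apply hKtt
  refine ⟨Sum.elim p q, ?_, ?_⟩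
  · intro a b hab
    cases a with
    | inl i => cases b with
      | inl j => simp only [Sum.elim_inl] at hab; exact congrArg Sum.inl (hp hab)
      | inr j => exact absurd hab (hpq i j)
    | inr i => cases b with
      | inl j => exact absurd hab.symm (hpq j i)
      | inr j => simp only [Sum.elim_inr] at hab; exact congrArg Sum.inr (hq hab)
  · intro a b
    cases a with
    | inl i => cases b with
      | inl j =>
        simp only [completeBipartiteGraph, Sum.elim_inl]
        constructor
        · intro h; simp at h
        · intro hadj'
          by_cases hij : i = j
          · subst hij; exact absurd hadj' (G.irrefl)
          · exact absurd hadj' (hpind i j hij)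
      | inr j =>
        simp only [completeBipartiteGraph, Sum.elim_inl, Sum.elim_inr]
        constructor
        · intro _; exact hadj i j
        · intro _; simp
    | inr i => cases b with
      | inl j =>
        simp only [completeBipartiteGraph, Sum.elim_inr, Sum.elim_inl]
        constructor
        · intro _; exact (hadj j i).symm
        · intro _; simp
      | inr j =>
        simp only [completeBipartiteGraph, Sum.elim_inr]
        constructor
        · intro h; simp at h
        · intro hadj'
          by_cases hij : i = j
          · subst hij; exact absurd hadj' (G.irrefl)
          · exact absurd hadj' (hqind i j hij)



lemma myRamsey {V : Type} (G : SimpleGraph V) :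
    ∀ (a b : ℕ) (A : Finset V), (a + b).choose a ≤ A.card →
    (∃ T ⊆ A, T.card = a + 1 ∧ ∀ x ∈ T, ∀ y ∈ T, x ≠ y → G.Adj x y) ∨
    (∃ T ⊆ A, T.card = b + 1 ∧ ∀ x ∈ T, ∀ y ∈ T, x ≠ y → ¬ G.Adj x y) := by
  intro a
  induction a with
  | zero =>
    intro b A hA
    left
    have : 0 < A.card := by
      have : (0 + b).choose 0 = 1 := by simp
      omega
    obtain ⟨x, hx⟩ := Finset.card_pos.mp this
    exact ⟨{x}, by simpa using hx, by simp, by simp⟩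
  | succ a iha =>
    intro b
    induction b with
    | zero =>
      intro A hA
      right
      have : 0 < A.card := by
        have h1 : 1 ≤ (a + 1 + 0).choose (a + 1) := Nat.choose_pos (by omega)
        omega
      obtain ⟨x, hx⟩ := Finset.card_pos.mp this
      exact ⟨{x}, by simpa using hx, by simp, by simp⟩
    | succ b ihb =>
      intro A hA
      have hpascal : (a + 1 + (b + 1)).choose (a + 1)
          = (a + 1 + b).choose a + (a + 1 + b).choose (a + 1) := by
        have : a + 1 + (b + 1) = (a + 1 + b) + 1 := by omega
        rw [this]
        rw [show a + 1 = a + 1 from rfl, Nat.choose_succ_succ' (a + 1 + b) a]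
      have hApos : 0 < A.card := by
        have h1 : 1 ≤ (a + 1 + b).choose a := Nat.choose_pos (by omega)
        have h2 : 1 ≤ (a + 1 + b).choose (a + 1) := Nat.choose_pos (by omega)
        omega
      obtain ⟨v, hv⟩ := Finset.card_pos.mp hApos
      set N := (A.erase v).filter (fun x => G.Adj v x) with hN
      set M := (A.erase v).filter (fun x => ¬ G.Adj v x) with hM
      have hcard : N.card + M.card = A.card - 1 := by
        rw [hN, hM, Finset.card_filter_add_card_filter_not]
        rw [Finset.card_erase_of_mem hv]
      have hsplit : (a + 1 + b).choose a ≤ N.card ∨ (a + 1 + b).choose (a + 1) ≤ M.card := by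
        by_contra hc
        push_neg at hc
        omega
      rcases hsplit with h | h
      · have := iha (b + 1) N (by rw [show a + (b+1) = a + 1 + b by omega]; exact h)
        rcases this with ⟨T, hTN, hTc, hTadj⟩ | ⟨T, hTN, hTc, hTind⟩
        · left
          refine ⟨insert v T, ?_, ?_, ?_⟩
          · intro x hx
            rcases Finset.mem_insert.mp hx with rfl | hx
            · exact hv
            · exact Finset.mem_of_mem_erase (Finset.mem_of_mem_filter _ (hTN hx))
          · have hvT : v ∉ T := by
              intro hvt
              exact Finset.notMem_erase v A (Finset.mem_of_mem_filter _ (hTN hvt))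
            rw [Finset.card_insert_of_notMem hvT, hTc]
          · intro x hx y hy hxy
            rcases Finset.mem_insert.mp hx with hx1 | hx1 <;>
              rcases Finset.mem_insert.mp hy with hy1 | hy1
            · exact absurd (hx1.trans hy1.symm) hxy
            · subst hx1; exact (Finset.mem_filter.mp (hTN hy1)).2
            · subst hy1; exact ((Finset.mem_filter.mp (hTN hx1)).2).symm
            · exact hTadj x hx1 y hy1 hxy
        · right
          exact ⟨T, fun x hx => Finset.mem_of_mem_erase (Finset.mem_of_mem_filter _ (hTN hx)),
            hTc, hTind⟩
      · have := ihb M h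
        rcases this with ⟨T, hTM, hTc, hTadj⟩ | ⟨T, hTM, hTc, hTind⟩
        · left
          exact ⟨T, fun x hx => Finset.mem_of_mem_erase (Finset.mem_of_mem_filter _ (hTM hx)),
            hTc, hTadj⟩
        · right
          refine ⟨insert v T, ?_, ?_, ?_⟩
          · intro x hx
            rcases Finset.mem_insert.mp hx with rfl | hx
            · exact hv
            · exact Finset.mem_of_mem_erase (Finset.mem_of_mem_filter _ (hTM hx))
          · have hvT : v ∉ T := by
              intro hvt
              exact Finset.notMem_erase v A (Finset.mem_of_mem_filter _ (hTM hvt))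
            rw [Finset.card_insert_of_notMem hvT, hTc]
          · intro x hx y hy hxy
            rcases Finset.mem_insert.mp hx with hx1 | hx1 <;>
              rcases Finset.mem_insert.mp hy with hy1 | hy1
            · exact absurd (hx1.trans hy1.symm) hxy
            · subst hx1; exact (Finset.mem_filter.mp (hTM hy1)).2
            · subst hy1
              intro hadj
              exact (Finset.mem_filter.mp (hTM hx1)).2 hadj.symm
            · exact hTind x hx1 y hy1 hxy

lemma myChooseLe (n k : ℕ) : n.choose k ≤ 2 ^ n := by
  rcases le_or_gt k n with h | h
  · calc n.choose k ≤ ∑ m ∈ Finset.range (n + 1), n.choose m :=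
        Finset.single_le_sum (fun i _ => Nat.zero_le _) (Finset.mem_range.mpr (by omega))
      _ = 2 ^ n := Nat.sum_range_choose n
  · rw [Nat.choose_eq_zero_of_lt h]; positivity

lemma myNum (t : ℕ) (ht : 0 < t) : (t - 1 + (t - 1)).choose (t - 1) ≤ t ^ t := by
  refine le_trans (myChooseLe _ _) ?_
  match t, ht with
  | 1, _ => decide
  | 2, _ => decide
  | 3, _ => decide
  | (n+4), _ =>
    calc 2 ^ (n + 4 - 1 + (n + 4 - 1)) = 4 ^ (n + 3) := by
          rw [show n + 4 - 1 + (n + 4 - 1) = 2 * (n + 3) by omega, pow_mul]; norm_num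
      _ ≤ (n + 4) ^ (n + 3) := Nat.pow_le_pow_left (by omega) _
      _ ≤ (n + 4) ^ (n + 4) := Nat.pow_le_pow_right (by omega) (by omega)

theorem stmt1 (l s t : ℕ) (hl : 0 < l) (hs : 0 < s) (ht : 0 < t)
    (V : Type) (G : SimpleGraph V)
    (hK : ¬ ContainsInduced G (⊤ : SimpleGraph (Fin (t + 1))))
    (hKtt : ¬ ContainsInduced G (completeBipartiteGraph (Fin t) (Fin t)))
    (S : Finset V) (L0 : Finset (List V))
    (hcl : IsCluster G s (l + t ^ t * s ^ t ^ t) S L0) :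
    ∃ L ⊆ L0, L.card = l ∧ IsCluster G s l S L ∧ IsMeager G (t ^ t) S L := by
  classical
  obtain ⟨hS, hL0, hpaths, hdisj, hdom⟩ := hcl
  set Good := L0.filter (fun P => ∀ v ∈ P, (S.filter (fun y => G.Adj v y)).card < t ^ t)
    with hGoodDef
  set Bad := L0.filter (fun P => ¬ ∀ v ∈ P, (S.filter (fun y => G.Adj v y)).card < t ^ t)
    with hBadDef
  have hBadCard : Bad.card ≤ t ^ t * s ^ t ^ t := by
    rcases Finset.eq_empty_or_nonempty Bad with hBE | ⟨P₀, hP₀⟩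
    · rw [hBE]; simp
    · have hP₀L0 : P₀ ∈ L0 := Finset.mem_of_mem_filter _ hP₀
      obtain ⟨v₀, hv₀⟩ : ∃ x, x ∈ P₀ :=
        List.exists_mem_of_ne_nil P₀ (hpaths P₀ hP₀L0).1.1
      have hmain : ∀ P : List V, ∃ (v : V) (T : Finset V), P ∈ Bad →
          v ∈ P ∧ v ∉ S ∧ T ⊆ S ∧ T.card = t ∧
          (∀ x ∈ T, ∀ y ∈ T, x ≠ y → ¬ G.Adj x y) ∧ (∀ y ∈ T, G.Adj v y) := by
        intro P
        by_cases hP : P ∈ Bad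
        · have hPm := Finset.mem_filter.mp hP
          obtain ⟨hPL0, hPbad⟩ := hPm
          push_neg at hPbad
          obtain ⟨v, hvP, hvd⟩ := hPbad
          have hvd' : t ^ t ≤ (S.filter (fun y => G.Adj v y)).card := hvd
          have hvS : v ∉ S := (hpaths P hPL0).2 v hvP
          set N := S.filter (fun y => G.Adj v y) with hNdef
          have hNcard : (t - 1 + (t - 1)).choose (t - 1) ≤ N.card :=
            le_trans (myNum t ht) hvd'
          rcases myRamsey G (t - 1) (t - 1) N hNcard with
            ⟨T, hTN, hTc, hTadj⟩ | ⟨T, hTN, hTc, hTind⟩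
          · exfalso
            have hTS : T ⊆ S := hTN.trans (Finset.filter_subset _ _)
            have hvT : v ∉ T := fun h => hvS (hTS h)
            refine noCliqueTest G t hK (insert v T) ?_ ?_
            · rw [Finset.card_insert_of_notMem hvT, hTc]; omega
            · intro x hx y hy hxy
              rcases Finset.mem_insert.mp hx with hx1 | hx1 <;>
                rcases Finset.mem_insert.mp hy with hy1 | hy1
              · exact absurd (hx1.trans hy1.symm) hxy
              · subst hx1; exact (Finset.mem_filter.mp (hTN hy1)).2
              · subst hy1; exact ((Finset.mem_filter.mp (hTN hx1)).2).symm
              · exact hTadj x hx1 y hy1 hxy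
          · refine ⟨v, T, fun _ => ⟨hvP, hvS, hTN.trans (Finset.filter_subset _ _),
              by omega, hTind, fun y hy => (Finset.mem_filter.mp (hTN hy)).2⟩⟩
        · exact ⟨v₀, ∅, fun h => absurd h hP⟩
      choose vF TF hF using hmain
      have himg : Bad.image TF ⊆ S.powersetCard t := by
        intro T hT
        obtain ⟨P, hP, rfl⟩ := Finset.mem_image.mp hT
        obtain ⟨_, _, h3, h4, _, _⟩ := hF P hP
        exact Finset.mem_powersetCard.mpr ⟨h3, h4⟩
      have hfib : ∀ T ∈ Bad.image TF, (Bad.filter (fun P => TF P = T)).card ≤ t - 1 := by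
        intro T hT
        by_contra hc
        push_neg at hc
        obtain ⟨F, hFsub, hFc⟩ := Finset.exists_subset_card_eq
          (show t ≤ (Bad.filter (fun P => TF P = T)).card by omega)
        obtain ⟨g, hginj, hgmem⟩ := myEnum t F hFc
        have hgBad : ∀ i, g i ∈ Bad ∧ TF (g i) = T :=
          fun i => Finset.mem_filter.mp (hFsub (hgmem i))
        have hgL0 : ∀ i, g i ∈ L0 := fun i => Finset.mem_of_mem_filter _ (hgBad i).1
        have hgF : ∀ i, vF (g i) ∈ g i ∧ vF (g i) ∉ S ∧ TF (g i) ⊆ S ∧ (TF (g i)).card = t ∧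
            (∀ x ∈ TF (g i), ∀ y ∈ TF (g i), x ≠ y → ¬ G.Adj x y) ∧
            (∀ y ∈ TF (g i), G.Adj (vF (g i)) y) := fun i => hF (g i) (hgBad i).1
        have i₀ : Fin t := ⟨0, ht⟩
        have hTcard : T.card = t := by
          rw [← (hgBad i₀).2]; exact (hgF i₀).2.2.2.1
        obtain ⟨q, hqinj, hqmem⟩ := myEnum t T hTcard
        have hqS : ∀ j, q j ∈ S := by
          intro j
          have := (hgF i₀).2.2.1
          rw [(hgBad i₀).2] at this
          exact this (hqmem j)
        refine noBipTest G t hKtt (fun i => vF (g i)) q ?_ hqinj ?_ ?_ ?_ ?_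
        · intro i j hij
          by_contra hne
          have hgij : g i ≠ g j := fun h => hne (hginj h)
          exact ((hdisj (g i) (hgL0 i) (g j) (hgL0 j) hgij (vF (g i)) (hgF i).1
            (vF (g j)) (hgF j).1).1) hij
        · intro i j h
          exact (hgF i).2.1 (h ▸ hqS j)
        · intro i j hij
          have hgij : g i ≠ g j := fun h => hij (hginj h)
          exact (hdisj (g i) (hgL0 i) (g j) (hgL0 j) hgij (vF (g i)) (hgF i).1
            (vF (g j)) (hgF j).1).2
        · intro i j hij
          have hind := (hgF i₀).2.2.2.2.1
          rw [(hgBad i₀).2] at hind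
          exact hind (q i) (hqmem i) (q j) (hqmem j) (fun h => hij (hqinj h))
        · intro i j
          have hadj := (hgF i).2.2.2.2.2
          rw [(hgBad i).2] at hadj
          exact hadj (q j) (hqmem j)
      calc Bad.card ≤ (t - 1) * (Bad.image TF).card :=
            Finset.card_le_mul_card_image Bad (t - 1) hfib
        _ ≤ (t - 1) * (S.powersetCard t).card :=
            Nat.mul_le_mul_left _ (Finset.card_le_card himg)
        _ = (t - 1) * s.choose t := by rw [Finset.card_powersetCard, hS]
        _ ≤ t ^ t * s ^ t ^ t := by
            refine Nat.mul_le_mul ?_ ?_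
            · calc t - 1 ≤ t := by omega
                _ ≤ t ^ t := Nat.le_self_pow (by omega) t
            · calc s.choose t ≤ s ^ t := Nat.choose_le_pow s t
                _ ≤ s ^ t ^ t := Nat.pow_le_pow_right hs (Nat.le_self_pow (by omega) t)
  have hcards : Good.card + Bad.card = L0.card :=
    Finset.card_filter_add_card_filter_not _
  have hGoodCard : l ≤ Good.card := by omega
  obtain ⟨L, hLG, hLc⟩ := Finset.exists_subset_card_eq hGoodCard
  have hLL0 : L ⊆ L0 := hLG.trans (Finset.filter_subset _ _)
  refine ⟨L, hLL0, hLc, ⟨hS, hLc, fun P hP => hpaths P (hLL0 hP),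
    fun P hP Q hQ => hdisj P (hLL0 hP) Q (hLL0 hQ),
    fun x hx P hP => hdom x hx P (hLL0 hP)⟩, ?_⟩
  intro P hP v hv
  exact (Finset.mem_filter.mp (hLG hP)).2 v hv
end

section
/- For all positive integers a (or a = 0), b (or b = 0), and m, there is a constant Υ = Υ(a,b,m) with the following property. Let G be a graph and let B_1, ..., B_m be collections of pairwise disjoint a-pairs over V(G), each of cardinality at least Υ. Then for every i there exists B'_i ⊆ B_i with |B'_i| ≥ b such that for all distinct i, j: (a) A_i ∩ B_j = ∅ for all (A_i, B_i) ∈ B'_i and (A_j, B_j) ∈ B'_j; and (b) either A_i is anticomplete to B_j in G for all such pairs, or for every (A_i, B_i) ∈ B'_i there exists x_i ∈ A_i having a neighbor in B_j for every (A_j, B_j) ∈ B'_j. -/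
/-- Product version of Ramsey's theorem. -/

theorem prodRamsey (C : Type) [Fintype C] (q : ℕ) :
    ∀ m : ℕ, ∃ N : ℕ, ∀ (α : Fin m → Type) (U : ∀ i, Finset (α i))
      (Φ : (∀ i, α i) → C), (∀ i, N ≤ (U i).card) →
      ∃ (Z : ∀ i, Finset (α i)) (c : C),
        (∀ i, Z i ⊆ U i ∧ q ≤ (Z i).card) ∧
        (∀ f : ∀ i, α i, (∀ i, f i ∈ Z i) → Φ f = c) := by
  intro m
  induction m with
  | zero =>
      refine ⟨0, fun α U Φ _ => ⟨fun i => i.elim0, Φ (fun i => i.elim0), fun i => i.elim0, ?_⟩⟩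
      intro f _
      congr 1
      funext i; exact i.elim0
  | succ m ih =>
      classical
      obtain ⟨N₀, hN₀⟩ := ih
      refine ⟨max N₀ (Fintype.card C ^ (N₀ ^ m) * (q - 1) + 1), fun α U Φ hU => ?_⟩
      have hsub : ∀ i : Fin m, ∃ T ⊆ U i.castSucc, T.card = N₀ := fun i =>
        Finset.exists_subset_card_eq (le_trans (le_max_left _ _) (hU i.castSucc))
      choose T hTsub hTcard using hsub
      have hcardD : Fintype.card ((i : Fin m) → {x // x ∈ T i}) = N₀ ^ m := by
        have h : ∀ i : Fin m, Fintype.card {x // x ∈ T i} = N₀ := fun i => by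
          rw [Fintype.card_coe, hTcard]
        rw [Fintype.card_pi, Finset.prod_congr rfl (fun i _ => h i), Finset.prod_const,
          Finset.card_univ, Fintype.card_fin]
      set g : α (Fin.last m) → (((i : Fin m) → {x // x ∈ T i}) → C) :=
        fun u t => Φ (Fin.snoc (fun i => (t i).val) u) with hg
      have hcardC : (Finset.univ : Finset (((i : Fin m) → {x // x ∈ T i}) → C)).card * (q - 1)
          < (U (Fin.last m)).card := by
        have h1 : Fintype.card ((((i : Fin m) → {x // x ∈ T i})) → C)
            = Fintype.card C ^ (N₀ ^ m) := by
          rw [Fintype.card_fun, hcardD]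
        have h3 : Fintype.card C ^ N₀ ^ m * (q - 1) + 1 ≤ (U (Fin.last m)).card :=
          le_trans (le_max_right _ _) (hU (Fin.last m))
        rw [Finset.card_univ, h1]
        omega
      obtain ⟨g₀, -, hg₀⟩ := Finset.exists_lt_card_fiber_of_mul_lt_card_of_maps_to
        (fun u _ => Finset.mem_univ (g u)) hcardC
      obtain ⟨Z', c, hZ', hmono⟩ := hN₀ (fun i => {x // x ∈ T i}) (fun _ => Finset.univ) g₀
        (fun i => by rw [Finset.card_univ, Fintype.card_coe, hTcard])
      refine ⟨Fin.lastCases (Finset.filter (fun u => g u = g₀) (U (Fin.last m)))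
        (fun i => (Z' i).image Subtype.val), c, ?_, ?_⟩
      · intro i
        refine Fin.lastCases ?_ ?_ i
        · simp only [Fin.lastCases_last]
          exact ⟨Finset.filter_subset _ _, by omega⟩
        · intro i
          simp only [Fin.lastCases_castSucc]
          constructor
          · intro x hx
            obtain ⟨s, hs, rfl⟩ := Finset.mem_image.mp hx
            exact hTsub i s.2
          · rw [Finset.card_image_of_injective _ Subtype.val_injective]
            exact (hZ' i).2
      · intro f hf
        have hu : f (Fin.last m) ∈ Finset.filter (fun u => g u = g₀) (U (Fin.last m)) := by
          have := hf (Fin.last m)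
          simpa only [Fin.lastCases_last] using this
        have hgu : g (f (Fin.last m)) = g₀ := (Finset.mem_filter.mp hu).2
        have hmem : ∀ i : Fin m, ∃ s : {x // x ∈ T i}, s ∈ Z' i ∧ s.val = f i.castSucc := by
          intro i
          have := hf i.castSucc
          simp only [Fin.lastCases_castSucc] at this
          obtain ⟨s, hs, hval⟩ := Finset.mem_image.mp this
          exact ⟨s, hs, hval⟩
        choose s hs hval using hmem
        have hfeq : f = Fin.snoc (fun i => (s i).val) (f (Fin.last m)) := by
          funext i
          refine Fin.lastCases ?_ ?_ i
          · rw [Fin.snoc_last]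
          · intro i
            rw [Fin.snoc_castSucc, hval]
        calc Φ f = g (f (Fin.last m)) s := by rw [hg]; exact congrArg Φ hfeq
        _ = g₀ s := by rw [hgu]
        _ = c := hmono s (fun i => hs i)

/-- Ramsey-type lemma about pairwise disjoint `a`-pairs. An `a`-pair over `V`
is a pair `(A, B)` of finite vertex sets with `|A| ≤ a`; two `a`-pairs are
disjoint if their second coordinates are disjoint. -/
theorem stmt3 (a b m : ℕ) (hm : 0 < m) :
    ∃ Υ : ℕ, ∀ (V : Type) (G : SimpleGraph V)
      (B : Fin m → Finset (Finset V × Finset V)),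
      (∀ i, ∀ p ∈ B i, p.1.card ≤ a) →
      (∀ i, ∀ p ∈ B i, ∀ q ∈ B i, p ≠ q → Disjoint p.2 q.2) →
      (∀ i, Υ ≤ (B i).card) →
      ∃ B' : Fin m → Finset (Finset V × Finset V),
        (∀ i, B' i ⊆ B i ∧ b ≤ (B' i).card) ∧
        ∀ i j, i ≠ j →
          ((∀ p ∈ B' i, ∀ q ∈ B' j, Disjoint p.1 q.2) ∧
           ((∀ p ∈ B' i, ∀ q ∈ B' j, ∀ u ∈ p.1, ∀ v ∈ q.2, ¬ G.Adj u v) ∨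
            (∀ p ∈ B' i, ∃ x ∈ p.1, ∀ q ∈ B' j, ∃ v ∈ q.2, G.Adj x v))) := by
  classical
  obtain ⟨N, hN⟩ := prodRamsey (Fin m → Fin m → Bool × Finset (Fin a)) (a + b + 1) m
  refine ⟨N, fun V G B hcard_a hdisj hB => ?_⟩
  set color : (Finset V × Finset V) → (Finset V × Finset V) → Bool × Finset (Fin a) :=
    fun p q => ((if Disjoint p.1 q.2 then true else false),
      Finset.univ.filter (fun k : Fin a =>
        ∃ x, p.1.toList[(k : ℕ)]? = some x ∧ ∃ v ∈ q.2, G.Adj x v)) with hcolor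
  obtain ⟨Z, c, hZ, hmono⟩ := hN (fun _ => Finset V × Finset V) B
    (fun f i j => color (f i) (f j)) hB
  have hZq : ∀ i, a + b + 1 ≤ (Z i).card := fun i => (hZ i).2
  have hZsub : ∀ i, Z i ⊆ B i := fun i => (hZ i).1
  have hne : ∀ i, ∃ x, x ∈ Z i := by
    intro i
    have : 0 < (Z i).card := by have := hZq i; omega
    obtain ⟨x, hx⟩ := Finset.card_pos.mp this
    exact ⟨x, hx⟩
  choose d hd using hne
  -- key: the color of any cross pair is constant
  have key : ∀ i j, i ≠ j → ∀ p ∈ Z i, ∀ q ∈ Z j, color p q = c i j := by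
    intro i j hij p hp q hq
    have hmem : ∀ k, (fun k => if k = i then p else if k = j then q else d k) k ∈ Z k := by
      intro k
      by_cases hki : k = i
      · subst hki; simp [hp]
      · by_cases hkj : k = j
        · subst hkj; simp [hki, hq]
        · simp [hki, hkj, hd k]
    have h := hmono (fun k => if k = i then p else if k = j then q else d k) hmem
    have h2 := congrFun (congrFun h i) j
    simpa [hij, Ne.symm hij] using h2
  -- part (a): disjointness
  have hA : ∀ i j, i ≠ j → ∀ p ∈ Z i, ∀ q ∈ Z j, Disjoint p.1 q.2 := by
    intro i j hij
    by_cases hc : (c i j).1 = true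
    · intro p hp q hq
      have h := key i j hij p hp q hq
      by_contra hnd
      have : (color p q).1 = true := by rw [h, hc]
      simp only [hcolor, if_neg hnd] at this
      exact Bool.false_ne_true this
    · exfalso
      have hall : ∀ q ∈ Z j, ∃ x, x ∈ (d i).1 ∧ x ∈ q.2 := by
        intro q hq
        by_contra hno
        push_neg at hno
        have hdj : Disjoint (d i).1 q.2 := Finset.disjoint_left.mpr (fun {x} hx hx2 => hno x hx hx2)
        have h := key i j hij (d i) (hd i) q hq
        apply hc
        rw [← h]
        simp only [hcolor, if_pos hdj]
      choose F hF1 hF2 using hall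
      set F' : (Finset V × Finset V) → V := fun q =>
        if h : q ∈ Z j then F q h else F (d j) (hd j) with hF'
      have hmaps : ∀ q ∈ Z j, F' q ∈ (d i).1 := by
        intro q hq; simp only [hF', dif_pos hq]; exact hF1 q hq
      have hinj : Set.InjOn F' (Z j : Set (Finset V × Finset V)) := by
        intro q hq q' hq' heq
        rw [Finset.mem_coe] at hq hq'
        by_contra hne'
        have hdisj' : Disjoint q.2 q'.2 := hdisj j q (hZsub j hq) q' (hZsub j hq') hne'
        have h1 : F' q ∈ q.2 := by simp only [hF', dif_pos hq]; exact hF2 q hq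
        have h2 : F' q' ∈ q'.2 := by simp only [hF', dif_pos hq']; exact hF2 q' hq'
        rw [heq] at h1
        exact Finset.disjoint_left.mp hdisj' h1 h2
      have hle := Finset.card_le_card_of_injOn F' hmaps hinj
      have hca := hcard_a i (d i) (hZsub i (hd i))
      have := hZq j
      omega
  refine ⟨Z, fun i => ⟨hZsub i, by have := hZq i; omega⟩, fun i j hij => ⟨hA i j hij, ?_⟩⟩
  -- part (b)
  by_cases hS : (c i j).2 = ∅
  · left
    intro p hp q hq u hu v hv hadj
    obtain ⟨n, hn, hgn⟩ := List.mem_iff_getElem.mp (Finset.mem_toList.mpr hu)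
    have hna : n < a := by
      have := hcard_a i p (hZsub i hp)
      rw [Finset.length_toList] at hn
      omega
    have hk : (⟨n, hna⟩ : Fin a) ∈ (color p q).2 := by
      simp only [hcolor, Finset.mem_filter, Finset.mem_univ, true_and]
      exact ⟨u, List.getElem?_eq_some_iff.mpr ⟨hn, hgn⟩, v, hv, hadj⟩
    rw [key i j hij p hp q hq, hS] at hk
    exact Finset.notMem_empty _ hk
  · right
    obtain ⟨k, hk⟩ := Finset.nonempty_iff_ne_empty.mpr hS
    intro p hp
    have h0 := key i j hij p hp (d j) (hd j)
    have hk0 : k ∈ (color p (d j)).2 := by rw [h0]; exact hk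
    simp only [hcolor, Finset.mem_filter, Finset.mem_univ, true_and] at hk0
    obtain ⟨x, hx, -⟩ := hk0
    obtain ⟨hlt, hget⟩ := List.getElem?_eq_some_iff.mp hx
    have hxp : x ∈ p.1 := by
      rw [← Finset.mem_toList, ← hget]
      exact List.getElem_mem hlt
    refine ⟨x, hxp, ?_⟩
    intro q hq
    have h1 := key i j hij p hp q hq
    have hk1 : k ∈ (color p q).2 := by rw [h1]; exact hk
    simp only [hcolor, Finset.mem_filter, Finset.mem_univ, true_and] at hk1
    obtain ⟨x', hx', v, hv, hadj⟩ := hk1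
    have : x' = x := by
      rw [hx] at hx'
      exact (Option.some.injEq _ _ ▸ hx').symm
    exact ⟨v, hv, this ▸ hadj⟩
end

section
/- For all positive integers l, q, s there is a constant σ = σ(l,q,s) with the following property. Let G be a graph and let P be a σ-polypath in G (a family of σ pairwise vertex-disjoint induced paths). Then either (a) there exists an (s,l)-cluster (S, L) in G with S ⊆ V(P) and L ⊆ P, or (b) there exists an l-loose q-polypath Q in G with Q ⊆ P. -/
open scoped Classical

/-- `P` is a `w`-polypath in `G`: a set of `w` pairwise vertex-disjoint
induced paths. -/
def IsPolypath {V : Type} (G : SimpleGraph V) (w : ℕ) (P : Finset (List V)) : Prop :=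
  P.card = w ∧ (∀ p ∈ P, IsPathList G p) ∧
  ∀ p ∈ P, ∀ q ∈ P, p ≠ q → ∀ v ∈ p, v ∉ q

/-- The polypath `P` is `d`-loose: every vertex of every path in `P` has
neighbors in fewer than `d` other paths of `P`. -/
def DLoose {V : Type} (G : SimpleGraph V) (d : ℕ) (P : Finset (List V)) : Prop :=
  ∀ p ∈ P, ∀ v ∈ p,
    ((P.erase p).filter (fun q => ∃ u ∈ q, G.Adj v u)).card < d

/-- `(S, L)` is an `(s,l)`-cluster in `G`: `S` has `s` vertices, `L` is an
`l`-polypath in `G − S`, and every vertex of `S` has a neighbor in every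
path of `L`. -/
def IsClusterP {V : Type} (G : SimpleGraph V) (s l : ℕ)
    (S : Finset V) (L : Finset (List V)) : Prop :=
  S.card = s ∧ IsPolypath G l L ∧
  (∀ p ∈ L, ∀ v ∈ p, v ∉ S) ∧
  (∀ x ∈ S, ∀ p ∈ L, ∃ v ∈ p, G.Adj x v)

/-!
Order the paths of `P` arbitrarily and call a path of a set `U` of paths a hub of `U` if one of
its vertices has a neighbour in every other path of `U`. Colour each `(l+1)`-set of paths by the
set of positions, in the order, at which its hubs sit. By Ramsey's theorem there is a large
monochromatic set `T`. If the colour is empty, no `l+1` paths of `T` contain a hub, which is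
exactly `l`-looseness of any `q` paths of `T`. If it contains a position `a`, split the first
`l + s` paths of `T` into `a` paths, then `s` paths `M`, then `l - a` paths; together the outer
blocks form `L`, and each path of `M`, inserted into `L`, sits at position `a`, so it contains a
vertex with a neighbour in every path of `L`. These `s` vertices form `S`.
-/

open Finset

section Ramsey

/-- Uniform in the ordered type `α`, because the bound `σ` of the theorem precedes the graph. -/
def IsRamseyBound (C : Type*) (q n ρ : ℕ) : Prop :=
  ∀ (α : Type) [LinearOrder α] (S : Finset α) (f : Finset α → C), ρ ≤ #S →
    ∃ T ⊆ S, n ≤ #T ∧ ∃ c, ∀ U ⊆ T, #U = q → f U = c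

/-- Erdős–Rado: take `a` the minimum of `S`, pass to a large homogeneous set for
`U ↦ f (insert a U)` on the rest, and recurse inside it. -/
theorem exists_endHomogeneous {C : Type*} {q : ℕ} (hq : ∀ n, ∃ ρ, IsRamseyBound C q n ρ)
    (k : ℕ) :
    ∃ ρ, ∀ (α : Type) [LinearOrder α] (S : Finset α) (f : Finset α → C), ρ ≤ #S →
      ∃ A ⊆ S, #A = k ∧ ∃ c : α → C,
        ∀ a ∈ A, ∀ U ⊆ {b ∈ A | a < b}, #U = q → f (insert a U) = c a := by
  choose ρq hρq using hq
  induction k with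
  | zero => exact ⟨0, fun α _ S f _ => ⟨∅, empty_subset _, rfl, fun _ => f ∅, by simp⟩⟩
  | succ k ih =>
    obtain ⟨ρk, hρk⟩ := ih
    refine ⟨ρq ρk + 1, fun α _ S f hS => ?_⟩
    have hne : S.Nonempty := card_pos.mp (by omega)
    set a := S.min' hne
    have ha : a ∈ S := S.min'_mem hne
    obtain ⟨T, hTS, hTcard, ca, hca⟩ := hρq ρk α (S.erase a) (fun U => f (insert a U))
      (by rw [card_erase_of_mem ha]; omega)
    obtain ⟨A, hAT, hAcard, c, hc⟩ := hρk α T f hTcard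
    have hlt : ∀ b ∈ A, a < b := fun b hb => S.min'_lt_of_mem_erase_min' hne (hTS (hAT hb))
    refine ⟨insert a A, insert_subset ha (hAT.trans (hTS.trans (erase_subset _ _))),
      by rw [card_insert_of_notMem fun h => (hlt a h).false, hAcard],
      Function.update c a ca, fun b hb U hU hUcard => ?_⟩
    rcases mem_insert.mp hb with rfl | hbA
    · rw [Function.update_self]
      rw [filter_insert, if_neg (lt_irrefl a)] at hU
      exact hca U (hU.trans ((filter_subset _ _).trans hAT)) hUcard
    · rw [Function.update_of_ne (hlt b hbA).ne']
      rw [filter_insert, if_neg (hlt b hbA).not_gt] at hU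
      exact hc b hbA U hU hUcard

theorem exists_isRamseyBound (C : Type*) [Fintype C] (q n : ℕ) :
    ∃ ρ, IsRamseyBound C q n ρ := by
  induction q generalizing n with
  | zero =>
    exact ⟨n, fun α _ S f hS =>
      ⟨S, subset_rfl, hS, f ∅, fun U _ hU => by rw [card_eq_zero.mp hU]⟩⟩
  | succ q ih =>
    obtain ⟨ρ, hρ⟩ := exists_endHomogeneous ih (Fintype.card C * n + 1)
    refine ⟨ρ, fun α _ S f hS => ?_⟩
    obtain ⟨A, hAS, hAcard, c, hc⟩ := hρ α S f hS
    have hpigeon : #(univ : Finset C) * n < #A := by rw [card_univ, hAcard]; omega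
    obtain ⟨y, -, hy⟩ :=
      exists_lt_card_fiber_of_mul_lt_card_of_maps_to (fun a _ => mem_univ (c a)) hpigeon
    refine ⟨{a ∈ A | c a = y}, (filter_subset _ _).trans hAS, hy.le, y, fun U hU hUcard => ?_⟩
    have hne : U.Nonempty := card_pos.mp (by omega)
    have hmin := U.min'_mem hne
    obtain ⟨hminA, hminy⟩ := mem_filter.mp (hU hmin)
    have hUmin : U.erase (U.min' hne) ⊆ {b ∈ A | U.min' hne < b} := fun u hu =>
      mem_filter.mpr ⟨(mem_filter.mp (hU (mem_of_mem_erase hu))).1,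
        U.min'_lt_of_mem_erase_min' hne hu⟩
    have key := hc _ hminA _ hUmin (by rw [card_erase_of_mem hmin]; omega)
    rwa [insert_erase hmin, hminy] at key

end Ramsey

section Rank

variable {α : Type*} [LinearOrder α]

theorem card_filter_lt_lt_card {U : Finset α} {x : α} (hx : x ∈ U) : #{y ∈ U | y < x} < #U :=
  card_lt_card (filter_ssubset.mpr ⟨x, hx, lt_irrefl x⟩)

theorem injOn_card_filter_lt (U : Finset α) : Set.InjOn (fun x => #{y ∈ U | y < x}) U := by
  intro x hx y hy hxy
  by_contra hne
  wlog hlt : x < y generalizing x y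
  · exact this hy hx hxy.symm (Ne.symm hne) ((Ne.lt_or_gt hne).resolve_left hlt)
  have hsub : {z ∈ U | z < x} ⊂ {z ∈ U | z < y} :=
    (ssubset_iff_of_subset fun z hz => by
      simp only [mem_filter] at hz ⊢; exact ⟨hz.1, hz.2.trans hlt⟩).mpr
      ⟨x, mem_filter.mpr ⟨hx, hlt⟩, fun h => lt_irrefl x (mem_filter.mp h).2⟩
  exact (card_lt_card hsub).ne hxy

theorem exists_initialSegment {T : Finset α} {k : ℕ} (hk : k ≤ #T) :
    ∃ A ⊆ T, #A = k ∧ ∀ x ∈ A, ∀ y ∈ T \ A, x < y := by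
  induction k with
  | zero => exact ⟨∅, empty_subset _, rfl, by simp⟩
  | succ k ih =>
    obtain ⟨A, hAT, hAcard, hA⟩ := ih (by omega)
    have hne : (T \ A).Nonempty := by rw [← card_pos, card_sdiff_of_subset hAT]; omega
    have hm := (T \ A).min'_mem hne
    refine ⟨insert ((T \ A).min' hne) A, insert_subset (mem_sdiff.mp hm).1 hAT,
      by rw [card_insert_of_notMem (mem_sdiff.mp hm).2, hAcard], fun x hx y hy => ?_⟩
    obtain ⟨hyT, hyA⟩ := mem_sdiff.mp hy
    rw [mem_insert, not_or] at hyA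
    rcases mem_insert.mp hx with rfl | hxA
    · exact (T \ A).min'_lt_of_mem_erase_min' hne
        (mem_erase.mpr ⟨hyA.1, mem_sdiff.mpr ⟨hyT, hyA.2⟩⟩)
    · exact hA x hxA y (mem_sdiff.mpr ⟨hyT, hyA.2⟩)

/-- Blocks `A < M < B` of sizes `a`, `s`, `l - a`, with `L = A ∪ B`. -/
theorem exists_blocks {T : Finset α} {a l s : ℕ} (ha : a ≤ l) (hT : l + s ≤ #T) :
    ∃ L ⊆ T, ∃ M ⊆ T, Disjoint L M ∧ #L = l ∧ #M = s ∧ ∀ m ∈ M, #{x ∈ L | x < m} = a := by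
  obtain ⟨A, hAT, hAcard, hA⟩ := exists_initialSegment (T := T) (k := a) (by omega)
  have hR : s ≤ #(T \ A) := by rw [card_sdiff_of_subset hAT]; omega
  obtain ⟨M, hMR, hMcard, hM⟩ := exists_initialSegment hR
  have hB : l - a ≤ #((T \ A) \ M) := by
    rw [card_sdiff_of_subset hMR, card_sdiff_of_subset hAT]; omega
  obtain ⟨B, hBR, hBcard⟩ := exists_subset_card_eq hB
  have hBA : Disjoint A B :=
    disjoint_right.mpr fun x hx => (mem_sdiff.mp (sdiff_subset (hBR hx))).2
  have hBM : Disjoint B M := disjoint_left.mpr fun x hx => (mem_sdiff.mp (hBR hx)).2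
  have hAM : Disjoint A M := disjoint_right.mpr fun x hx => (mem_sdiff.mp (hMR hx)).2
  refine ⟨A ∪ B, union_subset hAT ((hBR.trans sdiff_subset).trans sdiff_subset),
    M, hMR.trans sdiff_subset, disjoint_union_left.mpr ⟨hAM, hBM⟩,
    by rw [card_union_of_disjoint hBA, hAcard, hBcard]; omega, hMcard, fun m hm => ?_⟩
  rw [filter_union, filter_true_of_mem fun x hx => hA x hx m (hMR hm),
    filter_false_of_mem fun x hx => (hM m hm x (hBR hx)).not_gt, union_empty, hAcard]

end Rank

section Polypath

variable {V : Type} {G : SimpleGraph V}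

theorem IsPolypath.mono {w : ℕ} {P Q : Finset (List V)}
    (hP : IsPolypath G w P) (hQ : Q ⊆ P) : IsPolypath G #Q Q :=
  ⟨rfl, fun p hp => hP.2.1 p (hQ hp), fun p hp p' hp' => hP.2.2 p (hQ hp) p' (hQ hp')⟩

variable (G) in
def HasNeighborInEach (v : V) (L : Finset (List V)) : Prop :=
  ∀ p ∈ L, ∃ u ∈ p, G.Adj v u

variable (G) in
def IsHub (U : Finset (List V)) (p : List V) : Prop :=
  ∃ v ∈ p, HasNeighborInEach G v (U.erase p)

theorem dLoose_of_forall_not_isHub {Q : Finset (List V)} (l : ℕ)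
    (h : ∀ U ⊆ Q, #U = l + 1 → ∀ p ∈ U, ¬IsHub G U p) : DLoose G l Q := by
  intro p hp v hv
  by_contra! hl
  obtain ⟨L, hL, hLcard⟩ := exists_subset_card_eq hl
  have hLQ : L ⊆ Q.erase p := hL.trans (filter_subset _ _)
  have hpL : p ∉ L := fun h => by simpa using hLQ h
  refine h (insert p L) (insert_subset hp (hLQ.trans (erase_subset _ _)))
    (by rw [card_insert_of_notMem hpL, hLcard]) p (mem_insert_self p L) ⟨v, hv, ?_⟩
  rw [erase_insert hpL]
  exact fun p' hp' => (mem_filter.mp (hL hp')).2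

theorem exists_cluster_of_forall_hasNeighborInEach {σ : ℕ}
    {P L M : Finset (List V)} (hP : IsPolypath G σ P) (hL : L ⊆ P) (hM : M ⊆ P)
    (hLM : Disjoint L M) (hv : ∀ m ∈ M, ∃ v ∈ m, HasNeighborInEach G v L) :
    ∃ S : Finset V, (∀ x ∈ S, ∃ p ∈ M, x ∈ p) ∧ IsClusterP G #M #L S L := by
  choose v hvm hvL using hv
  have hdisj := hP.2.2
  have hvinj : Function.Injective fun m : M => v m.1 m.2 := fun m m' h => by
    by_contra hne
    refine hdisj m (hM m.2) m' (hM m'.2) (Subtype.coe_ne_coe.mpr hne) _ (hvm m m.2) ?_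
    simpa only [h] using hvm m' m'.2
  refine ⟨M.attach.image fun m : M => v m.1 m.2, fun x hx => ?_,
    by rw [card_image_of_injective _ hvinj, card_attach], hP.mono hL,
    fun p hp x hxp hx => ?_, fun x hx => ?_⟩ <;>
    obtain ⟨⟨m, hm⟩, -, rfl⟩ := mem_image.mp hx
  · exact ⟨m, hm, hvm m hm⟩
  · exact hdisj m (hM hm) p (hL hp) (fun h => disjoint_left.mp hLM (h ▸ hp) hm) _
      (hvm m hm) hxp
  · exact hvL m hm

variable [LinearOrder (List V)]

variable (G) in
noncomputable def hubRanks (l : ℕ) (U : Finset (List V)) : Finset (Fin (l + 1)) :=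
  univ.filter fun r => ∃ p ∈ U, #{x ∈ U | x < p} = r ∧ IsHub G U p

theorem not_isHub_of_hubRanks_eq_empty {l : ℕ} {U : Finset (List V)} (hU : #U = l + 1)
    (h : hubRanks G l U = ∅) : ∀ p ∈ U, ¬IsHub G U p := fun p hp hhub => by
  have hrank : #{x ∈ U | x < p} < l + 1 := hU ▸ card_filter_lt_lt_card hp
  have hmem : (⟨_, hrank⟩ : Fin (l + 1)) ∈ hubRanks G l U :=
    mem_filter.mpr ⟨mem_univ _, p, hp, rfl, hhub⟩
  simp [h] at hmem

theorem exists_cluster_of_mem_hubRanks {σ l s : ℕ} {P T : Finset (List V)}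
    (hP : IsPolypath G σ P) (hTP : T ⊆ P) (hT : l + s ≤ #T) {a : Fin (l + 1)}
    (ha : ∀ U ⊆ T, #U = l + 1 → a ∈ hubRanks G l U) :
    ∃ (S : Finset V) (L : Finset (List V)),
      (∀ x ∈ S, ∃ p ∈ P, x ∈ p) ∧ L ⊆ P ∧ IsClusterP G s l S L := by
  obtain ⟨L, hLT, M, hMT, hLM, hLcard, hMcard, hrank⟩ :=
    exists_blocks (Nat.lt_succ_iff.mp a.2) hT
  have hv : ∀ m ∈ M, ∃ v ∈ m, HasNeighborInEach G v L := by
    intro m hm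
    have hmL : m ∉ L := disjoint_right.mp hLM hm
    obtain ⟨-, p, hpU, hprank, v, hvp, hv⟩ := mem_filter.mp
      (ha (insert m L) (insert_subset (hMT hm) hLT) (by rw [card_insert_of_notMem hmL, hLcard]))
    have hmrank : #{x ∈ insert m L | x < m} = a := by
      rw [filter_insert, if_neg (lt_irrefl m), hrank m hm]
    obtain rfl : p = m :=
      injOn_card_filter_lt _ hpU (mem_insert_self m L) (hprank.trans hmrank.symm)
    rw [erase_insert hmL] at hv
    exact ⟨v, hvp, hv⟩
  obtain ⟨S, hSM, hS⟩ :=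
    exists_cluster_of_forall_hasNeighborInEach hP (hLT.trans hTP) (hMT.trans hTP) hLM hv
  refine ⟨S, L, fun x hx => ?_, hLT.trans hTP, hLcard ▸ hMcard ▸ hS⟩
  obtain ⟨p, hp, hxp⟩ := hSM x hx
  exact ⟨p, hMT.trans hTP hp, hxp⟩

end Polypath

theorem stmt4_general (l q s : ℕ) :
    ∃ σ : ℕ, ∀ (V : Type) (G : SimpleGraph V) (P : Finset (List V)),
      IsPolypath G σ P →
      (∃ (S : Finset V) (L : Finset (List V)),
        (∀ x ∈ S, ∃ p ∈ P, x ∈ p) ∧ L ⊆ P ∧ IsClusterP G s l S L) ∨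
      (∃ Q ⊆ P, IsPolypath G q Q ∧ DLoose G l Q) := by
  obtain ⟨σ, hσ⟩ := exists_isRamseyBound (Finset (Fin (l + 1))) (l + 1) (q + l + s)
  refine ⟨σ, fun V G P hP => ?_⟩
  let _ : LinearOrder (List V) := IsWellOrder.linearOrder WellOrderingRel
  obtain ⟨T, hTP, hTcard, c, hc⟩ := hσ (List V) P (hubRanks G l) hP.1.ge
  rcases c.eq_empty_or_nonempty with rfl | ⟨a, ha⟩
  · obtain ⟨Q, hQT, hQcard⟩ := exists_subset_card_eq (show q ≤ #T by omega)
    refine .inr ⟨Q, hQT.trans hTP, hQcard ▸ hP.mono (hQT.trans hTP), ?_⟩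
    exact dLoose_of_forall_not_isHub l fun U hU hUcard =>
      not_isHub_of_hubRanks_eq_empty hUcard (hc U (hU.trans hQT) hUcard)
  · exact .inl (exists_cluster_of_mem_hubRanks hP hTP (by omega)
      fun U hU hUcard => hc U hU hUcard ▸ ha)

theorem stmt4 (l q s : ℕ) (hl : 0 < l) (hq : 0 < q) (hs : 0 < s) :
    ∃ σ : ℕ, ∀ (V : Type) (G : SimpleGraph V) (P : Finset (List V)),
      IsPolypath G σ P →
      (∃ (S : Finset V) (L : Finset (List V)),
        (∀ x ∈ S, ∃ p ∈ P, x ∈ p) ∧ L ⊆ P ∧ IsClusterP G s l S L) ∨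
      (∃ Q ⊆ P, IsPolypath G q Q ∧ DLoose G l Q) :=
  stmt4_general l q s
end

section
/- Let l, s, w be positive integers, let G be a graph, and let Q and Q' be two ((s+1)^{l+1}·w^{l^2})-polypaths in G with V(Q) ∩ V(Q') = ∅. Then either (a) there exists an (s,l)-cluster (S, L) in G such that either S ⊆ V(Q) and L ⊆ Q', or S ⊆ V(Q') and L ⊆ Q; or (b) there exist subfamilies W ⊆ Q and W' ⊆ Q' with |W| = |W'| = w such that every vertex of V(W) has neighbors in fewer than l paths of W', and every vertex of V(W') has neighbors in fewer than l paths of W. -/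
open scoped Classical

/-!
Assume there is no cluster of the required kind. Then for every `l`-subset `L` of one family,
fewer than `s` vertices of the other family have a neighbour in every path of `L`. A vertex with
neighbours in at least `l` paths of `W'` has one in every path of some `l`-subset of `W'`, so at
most `C(|W'|, l) · s` paths of a family contain such a vertex. Pruning twice (first `Q` against a
subfamily of `Q'` of size `w + C(w, l) · s`, then that subfamily against the `w` surviving paths
of `Q`) leaves the two families required in (b); the bound `(s+1)^(l+1) w^(l²)` is what makes
the first pruning possible.
-/

open Finset

variable {V : Type} (G : SimpleGraph V)

/-- The paper's `V(F)`. -/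
noncomputable def pathVerts (F : Finset (List V)) : Finset V := F.biUnion List.toFinset

noncomputable def adjPaths (W : Finset (List V)) (v : V) : Finset (List V) :=
  W.filter fun q => ∃ u ∈ q, G.Adj v u

noncomputable def completeVerts (F L : Finset (List V)) : Finset V :=
  (pathVerts F).filter fun v => ∀ q ∈ L, ∃ u ∈ q, G.Adj v u

variable {G}

lemma mem_pathVerts {F : Finset (List V)} {v : V} : v ∈ pathVerts F ↔ ∃ p ∈ F, v ∈ p := by
  simp [pathVerts]

lemma adjPaths_mono {W₁ W₂ : Finset (List V)} (h : W₁ ⊆ W₂) (v : V) :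
    adjPaths G W₁ v ⊆ adjPaths G W₂ v :=
  filter_subset_filter _ h

lemma completeVerts_mono {F₁ F₂ : Finset (List V)} (h : F₁ ⊆ F₂) (L : Finset (List V)) :
    completeVerts G F₁ L ⊆ completeVerts G F₂ L :=
  filter_subset_filter _ (biUnion_subset_biUnion_of_subset_left _ h)

lemma IsPolypath.of_subset {n : ℕ} {B L : Finset (List V)} (hB : IsPolypath G n B)
    (hL : L ⊆ B) : IsPolypath G L.card L :=
  ⟨rfl, fun p hp => hB.2.1 p (hL hp), fun p hp q hq => hB.2.2 p (hL hp) q (hL hq)⟩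

lemma exists_cluster_of_le_card_completeVerts {n s : ℕ} {A B L : Finset (List V)}
    (hB : IsPolypath G n B) (hAB : ∀ p ∈ A, ∀ q ∈ B, ∀ v ∈ p, v ∉ q) (hL : L ⊆ B)
    (hs : s ≤ (completeVerts G A L).card) :
    ∃ S : Finset V, (∀ x ∈ S, ∃ p ∈ A, x ∈ p) ∧ IsClusterP G s L.card S L := by
  obtain ⟨S, hSsub, rfl⟩ := exists_subset_card_eq hs
  have hS : ∀ x ∈ S, (∃ p ∈ A, x ∈ p) ∧ ∀ q ∈ L, ∃ u ∈ q, G.Adj x u := by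
    intro x hx
    simpa [completeVerts, mem_pathVerts] using hSsub hx
  refine ⟨S, fun x hx => (hS x hx).1, rfl, hB.of_subset hL, ?_, fun x hx => (hS x hx).2⟩
  intro q hq v hvq hvS
  obtain ⟨p, hpA, hvp⟩ := (hS v hvS).1
  exact hAB p hpA q (hL hq) v hvp hvq

lemma card_completeVerts_lt_of_not_exists_cluster {n s l : ℕ} {A B : Finset (List V)}
    (hB : IsPolypath G n B) (hAB : ∀ p ∈ A, ∀ q ∈ B, ∀ v ∈ p, v ∉ q)
    (hno : ¬∃ (S : Finset V) (L : Finset (List V)),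
      ((∀ x ∈ S, ∃ p ∈ A, x ∈ p) ∧ L ⊆ B) ∧ IsClusterP G s l S L) :
    ∀ L ∈ B.powersetCard l, (completeVerts G A L).card < s := by
  intro L hL
  obtain ⟨hLB, rfl⟩ := mem_powersetCard.mp hL
  by_contra! h
  obtain ⟨S, hSA, hS⟩ := exists_cluster_of_le_card_completeVerts hB hAB hLB h
  exact hno ⟨S, L, ⟨hSA, hLB⟩, hS⟩

lemma card_filter_exists_mem_le {F : Finset (List V)}
    (hF : ∀ p ∈ F, ∀ q ∈ F, p ≠ q → ∀ v ∈ p, v ∉ q)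
    (P : V → Prop) [DecidablePred P] :
    (F.filter fun p => ∃ v ∈ p, P v).card ≤ ((pathVerts F).filter P).card := by
  refine card_le_card_of_forall_subsingleton (fun p v => v ∈ p) (fun p hp => ?_)
    (fun v _ p hp q hq => ?_)
  · obtain ⟨hpF, v, hvp, hPv⟩ := mem_filter.mp hp
    exact ⟨v, mem_filter.mpr ⟨mem_pathVerts.mpr ⟨p, hpF, hvp⟩, hPv⟩, hvp⟩
  · by_contra hne
    exact hF p (mem_filter.mp hp.1).1 q (mem_filter.mp hq.1).1 hne v hp.2 hq.2

lemma filter_le_card_adjPaths_subset_biUnion (F W : Finset (List V)) (l : ℕ) :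
    (pathVerts F).filter (fun v => l ≤ (adjPaths G W v).card) ⊆
      (W.powersetCard l).biUnion (completeVerts G F) := by
  intro v hv
  obtain ⟨hvF, hl⟩ := mem_filter.mp hv
  obtain ⟨L, hLsub, hLcard⟩ := exists_subset_card_eq hl
  have hLW : L ∈ W.powersetCard l :=
    mem_powersetCard.mpr ⟨hLsub.trans (filter_subset _ _), hLcard⟩
  exact mem_biUnion.mpr
    ⟨L, hLW, mem_filter.mpr ⟨hvF, fun q hq => (mem_filter.mp (hLsub hq)).2⟩⟩

lemma card_filter_le_card_adjPaths_le {F W : Finset (List V)} {l k : ℕ}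
    (hF : ∀ p ∈ F, ∀ q ∈ F, p ≠ q → ∀ v ∈ p, v ∉ q)
    (hk : ∀ L ∈ W.powersetCard l, (completeVerts G F L).card ≤ k) :
    (F.filter fun p => ∃ v ∈ p, l ≤ (adjPaths G W v).card).card ≤ W.card.choose l * k :=
  calc _ ≤ ((pathVerts F).filter (fun v => l ≤ (adjPaths G W v).card)).card :=
        card_filter_exists_mem_le hF fun v => l ≤ (adjPaths G W v).card
    _ ≤ ((W.powersetCard l).biUnion (completeVerts G F)).card :=
        card_le_card (filter_le_card_adjPaths_subset_biUnion F W l)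
    _ ≤ W.card.choose l * k := by
        simpa using card_biUnion_le_card_mul _ _ k hk

lemma exists_subset_forall_card_adjPaths_lt {F W : Finset (List V)} {l k w : ℕ}
    (hF : ∀ p ∈ F, ∀ q ∈ F, p ≠ q → ∀ v ∈ p, v ∉ q)
    (hk : ∀ L ∈ W.powersetCard l, (completeVerts G F L).card ≤ k)
    (hcard : w + W.card.choose l * k ≤ F.card) :
    ∃ U ⊆ F, U.card = w ∧ ∀ p ∈ U, ∀ v ∈ p, (adjPaths G W v).card < l := by
  set H := F.filter fun p => ∃ v ∈ p, l ≤ (adjPaths G W v).card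
  have hH : H.card ≤ W.card.choose l * k := card_filter_le_card_adjPaths_le hF hk
  obtain ⟨U, hUsub, hUcard⟩ := exists_subset_card_eq (s := F \ H) (n := w)
    (by have := le_card_sdiff H F; omega)
  refine ⟨U, hUsub.trans sdiff_subset, hUcard, fun p hp v hv => ?_⟩
  by_contra! hl
  exact (mem_sdiff.mp (hUsub hp)).2 (mem_filter.mpr ⟨(mem_sdiff.mp (hUsub hp)).1, v, hv, hl⟩)

lemma add_choose_mul_le_pow_mul (w l s : ℕ) (hl : l ≠ 0) :
    w + w.choose l * s ≤ w ^ l * (s + 1) :=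
  calc w + w.choose l * s ≤ w ^ l + w ^ l * s :=
        add_le_add (Nat.le_self_pow hl w) (Nat.mul_le_mul_right s (Nat.choose_le_pow w l))
    _ = w ^ l * (s + 1) := by ring

lemma le_and_add_choose_mul_le {w l s m : ℕ} (hl : l ≠ 0) (hm : m ≤ w ^ l * (s + 1)) :
    m ≤ (s + 1) ^ (l + 1) * w ^ (l ^ 2) ∧
      w + m.choose l * s ≤ (s + 1) ^ (l + 1) * w ^ (l ^ 2) := by
  have hpow : (w ^ l * (s + 1)) ^ l = w ^ (l ^ 2) * (s + 1) ^ l := by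
    rw [mul_pow, ← pow_mul, sq]
  have hsl : w ^ (l ^ 2) * (s + 1) ^ l ≤ (s + 1) ^ (l + 1) * w ^ (l ^ 2) :=
    calc w ^ (l ^ 2) * (s + 1) ^ l ≤ w ^ (l ^ 2) * (s + 1) ^ l * (s + 1) :=
          Nat.le_mul_of_pos_right _ s.succ_pos
      _ = (s + 1) ^ (l + 1) * w ^ (l ^ 2) := by ring
  constructor
  · calc m ≤ w ^ l * (s + 1) := hm
      _ ≤ (w ^ l * (s + 1)) ^ l := Nat.le_self_pow hl _
      _ ≤ _ := hpow ▸ hsl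
  · have hw : w ≤ w ^ (l ^ 2) * (s + 1) ^ l :=
      (Nat.le_self_pow (pow_ne_zero 2 hl) w).trans (Nat.le_mul_of_pos_right _ (by positivity))
    calc w + m.choose l * s ≤ w ^ (l ^ 2) * (s + 1) ^ l + w ^ (l ^ 2) * (s + 1) ^ l * s :=
          add_le_add hw (Nat.mul_le_mul_right s
            ((Nat.choose_le_pow m l).trans (hpow ▸ Nat.pow_le_pow_left hm l)))
      _ = (s + 1) ^ (l + 1) * w ^ (l ^ 2) := by ring

theorem stmt5_general (l s w : ℕ) (hl : 0 < l)
    (V : Type) (G : SimpleGraph V) (Q Q' : Finset (List V))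
    (hQ : IsPolypath G ((s + 1) ^ (l + 1) * w ^ (l ^ 2)) Q)
    (hQ' : IsPolypath G ((s + 1) ^ (l + 1) * w ^ (l ^ 2)) Q')
    (hdisj : ∀ p ∈ Q, ∀ p' ∈ Q', ∀ v ∈ p, v ∉ p') :
    (∃ (S : Finset V) (L : Finset (List V)),
      (((∀ x ∈ S, ∃ p ∈ Q, x ∈ p) ∧ L ⊆ Q') ∨
       ((∀ x ∈ S, ∃ p ∈ Q', x ∈ p) ∧ L ⊆ Q)) ∧
      IsClusterP G s l S L) ∨
    (∃ W ⊆ Q, ∃ W' ⊆ Q', W.card = w ∧ W'.card = w ∧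
      (∀ p ∈ W, ∀ v ∈ p, (W'.filter (fun q => ∃ u ∈ q, G.Adj v u)).card < l) ∧
      (∀ p ∈ W', ∀ v ∈ p, (W.filter (fun q => ∃ u ∈ q, G.Adj v u)).card < l)) := by
  refine or_iff_not_imp_left.mpr fun hA => ?_
  have hsmall := card_completeVerts_lt_of_not_exists_cluster hQ' hdisj
    fun ⟨S, L, h, hS⟩ => hA ⟨S, L, Or.inl h, hS⟩
  have hsmall' := card_completeVerts_lt_of_not_exists_cluster hQ
    (fun p hp q hq v hvp hvq => hdisj q hq p hp v hvq hvp)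
    fun ⟨S, L, h, hS⟩ => hA ⟨S, L, Or.inr h, hS⟩
  have hbound := le_and_add_choose_mul_le (s := s) hl.ne' (add_choose_mul_le_pow_mul w l s hl.ne')
  obtain ⟨R', hR'Q', hR'card⟩ := exists_subset_card_eq (hQ'.1 ▸ hbound.1)
  obtain ⟨W, hWQ, hWcard, hW⟩ := exists_subset_forall_card_adjPaths_lt hQ.2.2
    (fun L hL => (hsmall L (powersetCard_mono hR'Q' hL)).le) (hR'card ▸ hQ.1 ▸ hbound.2)
  obtain ⟨W', hW'R', hW'card, hW'⟩ := exists_subset_forall_card_adjPaths_lt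
    (fun p hp q hq => hQ'.2.2 p (hR'Q' hp) q (hR'Q' hq))
    (fun L hL => (card_le_card (completeVerts_mono hR'Q' L)).trans
      (hsmall' L (powersetCard_mono hWQ hL)).le)
    (by rw [hR'card, hWcard])
  exact ⟨W, hWQ, W', hW'R'.trans hR'Q', hWcard, hW'card,
    fun p hp v hv => (card_le_card (adjPaths_mono hW'R' v)).trans_lt (hW p hp v hv), hW'⟩

theorem stmt5 (l s w : ℕ) (hl : 0 < l) (hs : 0 < s) (hw : 0 < w)
    (V : Type) (G : SimpleGraph V) (Q Q' : Finset (List V))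
    (hQ : IsPolypath G ((s + 1) ^ (l + 1) * w ^ (l ^ 2)) Q)
    (hQ' : IsPolypath G ((s + 1) ^ (l + 1) * w ^ (l ^ 2)) Q')
    (hdisj : ∀ p ∈ Q, ∀ p' ∈ Q', ∀ v ∈ p, v ∉ p') :
    (∃ (S : Finset V) (L : Finset (List V)),
      (((∀ x ∈ S, ∃ p ∈ Q, x ∈ p) ∧ L ⊆ Q') ∨
       ((∀ x ∈ S, ∃ p ∈ Q', x ∈ p) ∧ L ⊆ Q)) ∧
      IsClusterP G s l S L) ∨
    (∃ W ⊆ Q, ∃ W' ⊆ Q', W.card = w ∧ W'.card = w ∧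
      (∀ p ∈ W, ∀ v ∈ p, (W'.filter (fun q => ∃ u ∈ q, G.Adj v u)).card < l) ∧
      (∀ p ∈ W', ∀ v ∈ p, (W.filter (fun q => ∃ u ∈ q, G.Adj v u)).card < l)) :=
  stmt5_general l s w hl V G Q Q' hQ hQ' hdisj
end

section
/- Let c, d be positive integers and let G be a graph containing a d-meager (2cd, 2c²d)-cluster. Then G contains a c-hassle as an induced subgraph. -/
/-!
Call a path `P` of the cluster good for `x ∈ S` if `x` is anticomplete to some `c` consecutive
vertices `P[a], …, P[a+c-1]`. On a good path, the walk from `P[a]` to a neighbour `P[j]` of `x`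
(beyond the window, after reversing `P` if necessary) and back to `P[a]` is `c`-stretched, since
any stretch of consecutive steps covers a subpath of the induced path `P`; it meets `N(x)`, and its
first and last `c` vertices lie in the window.

If `x` is not good for `P`, each of the `|P| / c` disjoint blocks of `c` consecutive vertices of
`P` contains a neighbour of `x`. Since every vertex of `P` has fewer than `d` neighbours in `S`,
at most `2c(d-1)` vertices of `S` are bad for `P`. Double counting yields `x ∈ S` that is bad for
at most `2c²(d-1)` of the `2c²d` paths, hence good for at least `2c² ≥ c` of them; the walks on
these pairwise disjoint paths form a `c`-hassle with neck `x`.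
-/

open scoped Classical

/-- `l` is the traversal sequence of a walk in `G`: nonempty, with consecutive
entries adjacent.  The vertex set of the walk is the set of entries of `l`. -/
def WalkList {V : Type} (G : SimpleGraph V) (l : List V) : Prop :=
  l ≠ [] ∧ ∀ (i : ℕ) (h : i + 1 < l.length),
    G.Adj (l.get ⟨i, by omega⟩) (l.get ⟨i + 1, h⟩)

/-- The walk `l` is `c`-stretched: the image of every set of at most `c`
consecutive indices induces a path. -/
def IsStretched {V : Type} (G : SimpleGraph V) (c : ℕ) (l : List V) : Prop :=
  ∀ i len : ℕ, 0 < len → len ≤ c → i + len ≤ l.length →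
    ∃ p : List V, (∀ v, v ∈ p ↔ v ∈ (l.drop i).take len) ∧ IsPathList G p

/-- `G` (restricted to `{x} ∪ ⋃ Ws`) is a `c`-hassle with neck `x` and walks
`Ws`: at least `c` pairwise disjoint `c`-stretched walks, arbitrary edges
between distinct walks, and the neck `x` has a neighbor in each walk but is
anticomplete to the first and last `c` vertices of each walk. -/
def IsHassle {V : Type} (G : SimpleGraph V) (c : ℕ) (x : V)
    (Ws : Finset (List V)) : Prop :=
  c ≤ Ws.card ∧
  (∀ l ∈ Ws, WalkList G l ∧ IsStretched G c l ∧ x ∉ l) ∧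
  (∀ l ∈ Ws, ∀ l' ∈ Ws, l ≠ l' → ∀ v ∈ l, v ∉ l') ∧
  (∀ l ∈ Ws, ∃ v ∈ l, G.Adj x v) ∧
  (∀ l ∈ Ws, ∀ v, (v ∈ l.take c ∨ v ∈ l.drop (l.length - c)) → ¬ G.Adj x v)

theorem List.mem_take_drop_iff_getElem {α : Type*} {l : List α} {i n : ℕ} {v : α} :
    v ∈ (l.drop i).take n ↔ ∃ (k : ℕ) (hk : k < l.length), i ≤ k ∧ k < i + n ∧ l[k] = v := by
  rw [List.mem_take_iff_getElem]
  constructor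
  · rintro ⟨t, ht, rfl⟩
    simp only [List.length_drop, lt_min_iff] at ht
    exact ⟨i + t, by omega, by omega, by omega, by simp⟩
  · rintro ⟨k, hk, hik, hkn, rfl⟩
    exact ⟨k - i, by simp; omega, by simp only [List.getElem_drop]; congr; omega⟩

namespace IsPathList

variable {V : Type} {G : SimpleGraph V} {P : List V}

theorem adj_getElem_iff (hP : IsPathList G P) {i j : ℕ} (hi : i < P.length) (hj : j < P.length) :
    G.Adj P[i] P[j] ↔ i + 1 = j ∨ j + 1 = i :=
  hP.2.2 ⟨i, hi⟩ ⟨j, hj⟩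

theorem take (hP : IsPathList G P) {n : ℕ} (hn : 0 < n) : IsPathList G (P.take n) := by
  refine ⟨by simp [hP.1]; omega, hP.2.1.sublist (List.take_sublist _ _), fun i j => ?_⟩
  simpa using hP.adj_getElem_iff (i := i) (j := j) (by grind) (by grind)

theorem drop (hP : IsPathList G P) {k : ℕ} (hk : k < P.length) : IsPathList G (P.drop k) := by
  refine ⟨by simp; omega, hP.2.1.sublist (List.drop_sublist _ _), fun i j => ?_⟩
  have := hP.adj_getElem_iff (i := k + i) (j := k + j) (by grind) (by grind)
  simp only [List.get_eq_getElem, List.getElem_drop, this]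
  omega

theorem reverse (hP : IsPathList G P) : IsPathList G P.reverse := by
  refine ⟨by simp [hP.1], List.nodup_reverse.mpr hP.2.1, fun i j => ?_⟩
  have := hP.adj_getElem_iff (i := P.length - 1 - i) (j := P.length - 1 - j) (by grind) (by grind)
  simp only [List.get_eq_getElem, List.getElem_reverse, this]
  grind

end IsPathList

theorem Nat.exists_image_Icc_eq_Icc {f : ℕ → ℕ}
    (hf : ∀ k, f (k + 1) ≤ f k + 1 ∧ f k ≤ f (k + 1) + 1) {i e : ℕ} (hie : i ≤ e) :
    ∃ lo hi, f '' Set.Icc i e = Set.Icc lo hi := by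
  induction e, hie using Nat.le_induction with
  | base => exact ⟨f i, f i, by simp⟩
  | succ e hie ih =>
    obtain ⟨lo, hi, himg⟩ := ih
    have hfe : f e ∈ Set.Icc lo hi := himg ▸ Set.mem_image_of_mem f ⟨hie, le_rfl⟩
    refine ⟨min lo (f (e + 1)), max hi (f (e + 1)), ?_⟩
    rw [← Set.insert_Icc_right_eq_Icc_add_one (by omega), Set.image_insert_eq, himg]
    ext q
    simp only [Set.mem_insert_iff, Set.mem_Icc] at hfe ⊢
    have := hf e
    omega

section Trace

variable {V : Type} {G : SimpleGraph V} {P w : List V} {f : ℕ → ℕ}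

theorem walkList_of_trace (hP : IsPathList G P) (hne : w ≠ [])
    (hw : ∀ k (hk : k < w.length), ∃ h : f k < P.length, w[k] = P[f k])
    (hf : ∀ k, k + 1 < w.length → f k + 1 = f (k + 1) ∨ f (k + 1) + 1 = f k) :
    WalkList G w := by
  refine ⟨hne, fun k hk => ?_⟩
  obtain ⟨h₁, e₁⟩ := hw k (by omega)
  obtain ⟨h₂, e₂⟩ := hw (k + 1) hk
  simpa only [List.get_eq_getElem, e₁, e₂, hP.adj_getElem_iff h₁ h₂] using hf k hk

theorem isStretched_of_trace (hP : IsPathList G P)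
    (hw : ∀ k (hk : k < w.length), ∃ h : f k < P.length, w[k] = P[f k])
    (hf : ∀ k, f (k + 1) ≤ f k + 1 ∧ f k ≤ f (k + 1) + 1) (c : ℕ) :
    IsStretched G c w := by
  intro i len hlen _ hle
  obtain ⟨lo, hi, himg⟩ := Nat.exists_image_Icc_eq_Icc hf (show i ≤ i + len - 1 by omega)
  have hmem : ∀ q, lo ≤ q ∧ q ≤ hi ↔ ∃ k, (i ≤ k ∧ k ≤ i + len - 1) ∧ f k = q := by
    intro q
    rw [← Set.mem_Icc, ← himg, Set.mem_image]
    simp only [Set.mem_Icc]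
  obtain ⟨hlo, hih⟩ := (hmem (f i)).2 ⟨i, ⟨le_rfl, by omega⟩, rfl⟩
  obtain ⟨k, hk, hfk⟩ := (hmem hi).1 ⟨by omega, le_rfl⟩
  have hhi : hi < P.length := hfk ▸ (hw k (by omega)).1
  refine ⟨(P.drop lo).take (hi - lo + 1), fun v => ?_, (hP.drop (by omega)).take (by omega)⟩
  rw [List.mem_take_drop_iff_getElem, List.mem_take_drop_iff_getElem]
  constructor
  · rintro ⟨q, hq, hlq, hqh, rfl⟩
    obtain ⟨k, hk, rfl⟩ := (hmem q).1 ⟨hlq, by omega⟩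
    obtain ⟨_, e⟩ := hw k (by omega)
    exact ⟨k, by omega, hk.1, by omega, e⟩
  · rintro ⟨k, hk, hik, hki, rfl⟩
    obtain ⟨h, e⟩ := hw k hk
    obtain ⟨hlk, hkh⟩ := (hmem (f k)).2 ⟨k, ⟨hik, by omega⟩, rfl⟩
    exact ⟨f k, h, hlk, by omega, e.symm⟩

end Trace

def HasWindow {V : Type} (G : SimpleGraph V) (c : ℕ) (x : V) (P : List V) : Prop :=
  ∃ a, a + c ≤ P.length ∧ ∀ k (hk : k < P.length), a ≤ k → k < a + c → ¬ G.Adj x P[k]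

def IsHassleWalk {V : Type} (G : SimpleGraph V) (c : ℕ) (x : V) (w : List V) : Prop :=
  WalkList G w ∧ IsStretched G c w ∧ (∃ v ∈ w, G.Adj x v) ∧
    ∀ v, (v ∈ w.take c ∨ v ∈ w.drop (w.length - c)) → ¬ G.Adj x v

section HassleWalk

variable {V : Type} {G : SimpleGraph V} {P : List V}

/-- The walk `P[a], P[a+1], …, P[j], P[j-1], …, P[a]`. -/
theorem exists_walk_there_and_back (hP : IsPathList G P) {a j : ℕ} (haj : a ≤ j)
    (hj : j < P.length) :
    ∃ w : List V, w.length = 2 * (j - a) + 1 ∧ WalkList G w ∧ (∀ c, IsStretched G c w) ∧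
      ∀ k (hk : k < w.length), ∃ h : a + min k (2 * (j - a) - k) < P.length,
        w[k] = P[a + min k (2 * (j - a) - k)] := by
  set f : ℕ → ℕ := fun k => a + min k (2 * (j - a) - k)
  let w := (List.range (2 * (j - a) + 1)).map fun k => P.getD (f k) P[j]
  have hw : ∀ k (hk : k < w.length), ∃ h : f k < P.length, w[k] = P[f k] := by
    intro k hk
    have hfk : f k < P.length := by simp only [f]; omega
    exact ⟨hfk, by simp [w, List.getElem?_eq_getElem hfk]⟩
  have hlen : w.length = 2 * (j - a) + 1 := by simp [w]
  refine ⟨w, hlen, walkList_of_trace hP (by simp [w]) hw ?_, isStretched_of_trace hP hw ?_, hw⟩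
  · exact fun k hk => by simp only [f]; omega
  · exact fun k => by simp only [f]; omega

theorem exists_isHassleWalk_of_window_of_le (hP : IsPathList G P) {c : ℕ} {x : V} {a j : ℕ}
    (hwin : ∀ k (hk : k < P.length), a ≤ k → k < a + c → ¬ G.Adj x P[k])
    (hacj : a + c ≤ j) (hj : j < P.length) (hx : G.Adj x P[j]) :
    ∃ w : List V, (∀ v ∈ w, v ∈ P) ∧ IsHassleWalk G c x w := by
  obtain ⟨w, hlen, hwalk, hstr, hw⟩ := exists_walk_there_and_back hP (by omega : a ≤ j) hj
  refine ⟨w, fun v hv => ?_, hwalk, hstr c, ⟨w[j - a]'(by omega), List.getElem_mem _, ?_⟩, ?_⟩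
  · obtain ⟨k, hk, rfl⟩ := List.mem_iff_getElem.mp hv
    obtain ⟨h, e⟩ := hw k hk
    exact e ▸ List.getElem_mem h
  · obtain ⟨h, e⟩ := hw (j - a) (by omega)
    have hmin : a + min (j - a) (2 * (j - a) - (j - a)) = j := by omega
    simpa only [e, hmin] using hx
  · rintro v (hv | hv)
    · obtain ⟨k, hk, rfl⟩ := List.mem_take_iff_getElem.mp hv
      obtain ⟨h, e⟩ := hw k (by omega)
      simpa only [List.getElem_take, e] using hwin _ h (by omega) (by omega)
    · obtain ⟨k, hk, rfl⟩ := List.mem_drop_iff_getElem.mp hv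
      obtain ⟨h, e⟩ := hw (w.length - c + k) (by omega)
      simpa only [List.getElem_drop, e] using hwin _ h (by omega) (by omega)

theorem HasWindow.exists_isHassleWalk (hP : IsPathList G P) {c : ℕ} {x : V}
    (hwin : HasWindow G c x P) (hx : ∃ v ∈ P, G.Adj x v) :
    ∃ w : List V, (∀ v ∈ w, v ∈ P) ∧ IsHassleWalk G c x w := by
  obtain ⟨a, hac, hwin⟩ := hwin
  obtain ⟨v, hv, hxv⟩ := hx
  obtain ⟨j, hj, rfl⟩ := List.mem_iff_getElem.mp hv
  rcases lt_or_ge j a with hja | haj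
  · have hrev : ∀ k (hk : k < P.reverse.length), P.reverse[k] = P[P.length - 1 - k] := by
      intro k hk
      exact List.getElem_reverse _
    obtain ⟨w, hwP, hw⟩ := exists_isHassleWalk_of_window_of_le hP.reverse
      (c := c) (a := P.length - (a + c)) (j := P.length - 1 - j)
      (fun k hk h₁ h₂ => by
        rw [List.length_reverse] at hk
        rw [hrev]
        exact hwin _ _ (by omega) (by omega))
      (by omega) (by simp; omega)
      (by simpa only [hrev, show P.length - 1 - (P.length - 1 - j) = j by omega] using hxv)
    exact ⟨w, fun v hv => List.mem_reverse.mp (hwP v hv), hw⟩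
  · refine exists_isHassleWalk_of_window_of_le hP hwin ?_ hj hxv
    by_contra! hjc
    exact hwin j hj haj hjc hxv

end HassleWalk

open Finset in
theorem Finset.exists_card_filter_le_of_forall_card_filter_le {α β : Type*} (r : α → β → Prop)
    [∀ a b, Decidable (r a b)] {s : Finset α} {t : Finset β} (hs : s.Nonempty) {m n : ℕ}
    (h : ∀ b ∈ t, #{a ∈ s | r a b} ≤ m) (hmn : #t * m ≤ #s * n) :
    ∃ a ∈ s, #{b ∈ t | r a b} ≤ n :=
  exists_le_of_sum_le hs <| calc
    ∑ a ∈ s, #{b ∈ t | r a b} = ∑ b ∈ t, #{a ∈ s | r a b} :=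
      sum_card_bipartiteAbove_eq_sum_card_bipartiteBelow r
    _ ≤ ∑ _b ∈ t, m := sum_le_sum h
    _ = #t * m := by rw [sum_const, smul_eq_mul]
    _ ≤ #s * n := hmn
    _ = ∑ _a ∈ s, n := by rw [sum_const, smul_eq_mul]

section Counting

open Finset

variable {V : Type} {G : SimpleGraph V}

theorem div_le_card_adj_of_not_hasWindow {c : ℕ} (hc : 0 < c) {x : V} {P : List V}
    (hP : P.Nodup) (h : ¬ HasWindow G c x P) :
    P.length / c ≤ #{v ∈ P.toFinset | G.Adj x v} := by
  have hcover : range (P.length / c) ⊆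
      {v ∈ P.toFinset | G.Adj x v}.image (fun v => P.idxOf v / c) := by
    intro t ht
    have htc : (t + 1) * c ≤ P.length := (Nat.le_div_iff_mul_le hc).1 (mem_range.1 ht)
    simp only [HasWindow, not_exists, not_and, not_forall, not_not] at h
    obtain ⟨k, hk, htk, hkt, hxk⟩ := h (t * c) (by rw [add_mul, one_mul] at htc; exact htc)
    refine mem_image.2 ⟨P[k], by simp [hxk], ?_⟩
    rw [hP.idxOf_getElem]
    exact Nat.div_eq_of_lt_le htk (by rw [add_mul, one_mul]; exact hkt)
  calc P.length / c = #(range (P.length / c)) := (card_range _).symm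
    _ ≤ _ := card_le_card hcover
    _ ≤ _ := card_image_le

theorem card_filter_not_hasWindow_le {c d : ℕ} (hc : 0 < c) (hd : 0 < d) {S : Finset V}
    {P : List V} (hP : P.Nodup) (hmeager : ∀ v ∈ P, #{y ∈ S | G.Adj v y} < d)
    (hS : ∀ x ∈ S, ∃ v ∈ P, G.Adj x v) (hcard : c * d ≤ #S) :
    #{x ∈ S | ¬ HasWindow G c x P} ≤ 2 * c * (d - 1) := by
  set n := P.length
  have htotal : ∑ x ∈ S, #{v ∈ P.toFinset | G.Adj x v} ≤ n * (d - 1) := by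
    calc ∑ x ∈ S, #{v ∈ P.toFinset | G.Adj x v} = ∑ v ∈ P.toFinset, #{x ∈ S | G.Adj x v} :=
          sum_card_bipartiteAbove_eq_sum_card_bipartiteBelow _
      _ ≤ ∑ _v ∈ P.toFinset, (d - 1) := sum_le_sum fun v hv => by
          have := hmeager v (List.mem_toFinset.1 hv)
          simp only [G.adj_comm _ v]
          omega
      _ = n * (d - 1) := by rw [sum_const, List.toFinset_card_of_nodup hP, smul_eq_mul]
  have hlower : #S ≤ ∑ x ∈ S, #{v ∈ P.toFinset | G.Adj x v} := by
    simpa using card_nsmul_le_sum S (fun x => #{v ∈ P.toFinset | G.Adj x v}) 1 fun x hx => by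
      obtain ⟨v, hv, hxv⟩ := hS x hx
      exact card_pos.2 ⟨v, by simp [hv, hxv]⟩
  have hcn : c ≤ n := by
    by_contra! hnc
    have := Nat.mul_le_mul_right (d - 1) hnc.le
    have := Nat.mul_le_mul_left c (Nat.sub_le d 1)
    have : c * (d - 1) < c * d := Nat.mul_lt_mul_of_pos_left (by omega) hc
    omega
  have hn : n ≤ 2 * c * (n / c) := calc
    n ≤ c * (n / c) + c := by
      have := Nat.lt_mul_div_succ n hc
      rw [mul_add, mul_one] at this
      omega
    _ ≤ 2 * c * (n / c) := by nlinarith [Nat.div_pos hcn hc]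
  refine Nat.le_of_mul_le_mul_right ?_ (Nat.div_pos hcn hc)
  calc #{x ∈ S | ¬ HasWindow G c x P} * (n / c)
      = #{x ∈ S | ¬ HasWindow G c x P} • (n / c) := (smul_eq_mul _ _).symm
    _ ≤ ∑ x ∈ S with ¬ HasWindow G c x P, #{v ∈ P.toFinset | G.Adj x v} :=
        card_nsmul_le_sum _ _ _ fun x hx =>
          div_le_card_adj_of_not_hasWindow hc hP (mem_filter.1 hx).2
    _ ≤ ∑ x ∈ S, #{v ∈ P.toFinset | G.Adj x v} := sum_le_sum_of_subset (filter_subset _ _)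
    _ ≤ 2 * c * (n / c) * (d - 1) := htotal.trans (Nat.mul_le_mul_right _ hn)
    _ = 2 * c * (d - 1) * (n / c) := by ring

end Counting

open Finset in
theorem exists_isHassle_of_forall_isHassleWalk {V : Type} {G : SimpleGraph V} {c : ℕ} {x : V}
    {Ps : Finset (List V)} (hcard : c ≤ #Ps)
    (hdisj : ∀ P ∈ Ps, ∀ Q ∈ Ps, P ≠ Q → ∀ v ∈ P, v ∉ Q) (hx : ∀ P ∈ Ps, x ∉ P)
    (hwalk : ∀ P ∈ Ps, ∃ w : List V, (∀ v ∈ w, v ∈ P) ∧ IsHassleWalk G c x w) :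
    ∃ Ws, IsHassle G c x Ws := by
  choose! F hFP hF using hwalk
  have hinj : Set.InjOn F Ps := by
    intro P hP Q hQ hPQ
    by_contra hne
    obtain ⟨v, hv⟩ := List.exists_mem_of_ne_nil _ (hF P hP).1.1
    exact hdisj P hP Q hQ hne v (hFP P hP v hv) (hFP Q hQ v (hPQ ▸ hv))
  refine ⟨Ps.image F, ?_, ?_, ?_, ?_, ?_⟩
  · rwa [card_image_of_injOn hinj]
  · simp only [forall_mem_image]
    exact fun P hP => ⟨(hF P hP).1, (hF P hP).2.1, fun h => hx P hP (hFP P hP x h)⟩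
  · simp only [forall_mem_image]
    exact fun P hP Q hQ hne v hv hv' =>
      hdisj P hP Q hQ (fun h => hne (h ▸ rfl)) v (hFP P hP v hv) (hFP Q hQ v hv')
  · simpa only [forall_mem_image] using fun P hP => (hF P hP).2.2.1
  · simpa only [forall_mem_image] using fun P hP => (hF P hP).2.2.2

theorem stmt6 (c d : ℕ) (hc : 0 < c) (hd : 0 < d)
    (V : Type) (G : SimpleGraph V) (S : Finset V) (L : Finset (List V))
    (hcl : IsCluster G (2 * c * d) (2 * c ^ 2 * d) S L)
    (hm : IsMeager G d S L) :
    ∃ (x : V) (Ws : Finset (List V)), IsHassle G c x Ws := by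
  obtain ⟨hScard, hLcard, hpaths, hdisj, hnbr⟩ := hcl
  have hbad : ∀ P ∈ L, (S.filter (¬ HasWindow G c · P)).card ≤ 2 * c * (d - 1) := fun P hP =>
    card_filter_not_hasWindow_le hc hd (hpaths P hP).1.2.1 (hm P hP)
      (fun x hx => hnbr x hx P hP) (by rw [hScard]; nlinarith)
  have hS : S.Nonempty := Finset.card_pos.1 (by rw [hScard]; positivity)
  obtain ⟨x, hxS, hx⟩ := Finset.exists_card_filter_le_of_forall_card_filter_le
    (fun x P => ¬ HasWindow G c x P) (n := 2 * c ^ 2 * (d - 1)) hS hbad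
    (le_of_eq (by rw [hScard, hLcard]; ring))
  have hgood : c ≤ (L.filter (HasWindow G c x)).card := by
    have := Finset.card_filter_add_card_filter_not (s := L) (HasWindow G c x)
    have : 2 * c ^ 2 * (d - 1) + 2 * c ^ 2 = 2 * c ^ 2 * d := by
      rw [← mul_add_one, Nat.sub_one_add_one hd.ne']
    nlinarith
  refine ⟨x, exists_isHassle_of_forall_isHassleWalk hgood ?_ ?_ ?_⟩
  · exact fun P hP Q hQ hPQ v hvP hvQ =>
      (hdisj P (Finset.mem_filter.1 hP).1 Q (Finset.mem_filter.1 hQ).1 hPQ v hvP v hvQ).1 rfl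
  · exact fun P hP hxP => (hpaths P (Finset.mem_filter.1 hP).1).2 x hxP hxS
  · exact fun P hP => (Finset.mem_filter.1 hP).2.exists_isHassleWalk (hpaths P (Finset.mem_filter.1 hP).1).1
      (hnbr x hxS P (Finset.mem_filter.1 hP).1)
end

section
/- Let n₀ be a positive integer and let H be a finite set of graphs such that no n-array is H-free for any n ≥ n₀. Let c = max(n₀, ΣH |V(H)|). Then for every c-tassel T there exists a graph H ∈ H such that every component of H is isomorphic to an induced subgraph of T; that is, H is tasselled with constant c. -/
def IsNArray {V : Type} (G : SimpleGraph V) (n : ℕ) : Prop :=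
  ∃ (L : Fin n → List V) (x : Fin n → V),
    (∀ i, IsPathList G (L i)) ∧
    (∀ i j, i ≠ j → ∀ u ∈ L i, ∀ v ∈ L j, u ≠ v ∧ ¬ G.Adj u v) ∧
    Function.Injective x ∧
    (∀ i j, ¬ G.Adj (x i) (x j)) ∧
    (∀ i j, x i ∉ L j) ∧
    (∀ v : V, (∃ i, v ∈ L i) ∨ (∃ i, v = x i)) ∧
    (∀ i j, ∃ v ∈ L i, G.Adj (x j) v) ∧
    (∀ i : Fin n, ∀ j : ℕ, ∀ hj : j + 1 < n,
      ∀ a b : Fin (L i).length,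
        G.Adj (x ⟨j, by omega⟩) ((L i).get a) →
        G.Adj (x ⟨j + 1, hj⟩) ((L i).get b) → (a : ℕ) < (b : ℕ))

def IsTasselGraph {V : Type} (G : SimpleGraph V) (c : ℕ) : Prop :=
  ∃ (x : V) (m n : ℕ) (A : Finset ℕ) (P : Fin m → List V),
    c ≤ m ∧ A.Nonempty ∧ (∀ i ∈ A, c ≤ i ∧ i + c < n) ∧
    (∀ j, (P j).length = n ∧ IsPathList G (P j) ∧ x ∉ P j) ∧
    (∀ j j', j ≠ j' → ∀ u ∈ P j, ∀ v ∈ P j', u ≠ v ∧ ¬ G.Adj u v) ∧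
    (∀ j, ∀ i : Fin (P j).length, G.Adj x ((P j).get i) ↔ (i : ℕ) ∈ A) ∧
    (∀ v : V, v = x ∨ ∃ j, v ∈ P j)

open SimpleGraph

/-- The array used to test `H`: path `i` is `inr (i, k)` for `k < N * L`, cut into `N` blocks of
length `L`, and neck `inl j` sees the positions `j * L + a`, `a ∈ A`, of block `j` of every path. -/
def arrayGraph (N L : ℕ) (A : Finset ℕ) : SimpleGraph (Fin N ⊕ (Fin N × Fin (N * L))) where
  Adj
    | .inl _, .inl _ => False
    | .inl j, .inr (_, k) | .inr (_, k), .inl j => (k : ℕ) / L = j ∧ (k : ℕ) % L ∈ A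
    | .inr (i, k), .inr (i', k') => i = i' ∧ ((k : ℕ) + 1 = k' ∨ (k' : ℕ) + 1 = k)
  symm := ⟨by
    rintro (j | ⟨i, k⟩) (j' | ⟨i', k'⟩) h
    exacts [h, h, h, ⟨h.1.symm, h.2.symm⟩]⟩
  loopless := ⟨by
    rintro (j | ⟨i, k⟩) h
    exacts [h, by omega]⟩

lemma Nat.div_mod_of_mem_block {L j k : ℕ} (h₁ : j * L ≤ k) (h₂ : k < j * L + L) :
    k / L = j ∧ k % L = k - j * L := by
  have hdiv : k / L = j := Nat.div_eq_of_lt_le h₁ (by rw [Nat.succ_mul]; exact h₂)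
  refine ⟨hdiv, ?_⟩
  rw [Nat.mod_eq_sub_mul_div, hdiv, Nat.mul_comm]

section arrayGraph

variable {N L : ℕ} {A : Finset ℕ}

@[simp] lemma arrayGraph_adj_inl_inl (j j' : Fin N) :
    ¬ (arrayGraph N L A).Adj (.inl j) (.inl j') := id

@[simp] lemma arrayGraph_adj_inl_inr (j i : Fin N) (k : Fin (N * L)) :
    (arrayGraph N L A).Adj (.inl j) (.inr (i, k)) ↔ (k : ℕ) / L = j ∧ (k : ℕ) % L ∈ A := Iff.rfl

@[simp] lemma arrayGraph_adj_inr_inr (i i' : Fin N) (k k' : Fin (N * L)) :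
    (arrayGraph N L A).Adj (.inr (i, k)) (.inr (i', k')) ↔
      i = i' ∧ ((k : ℕ) + 1 = k' ∨ (k' : ℕ) + 1 = k) := Iff.rfl

lemma arrayGraph_isNArray {a : ℕ} (ha : a ∈ A) (haL : a < L) :
    IsNArray (arrayGraph N L A) N := by
  refine ⟨fun i => List.ofFn fun k : Fin (N * L) => .inr (i, k), .inl,
    fun i => ⟨?_, ?_, ?_⟩, ?_, Sum.inl_injective, fun _ _ => id, ?_, ?_, ?_, ?_⟩
  · simpa using Nat.mul_ne_zero i.pos.ne' (by omega)
  · exact List.nodup_ofFn.mpr fun k k' h => by simpa using h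
  · intro k k'
    simp
  · intro i i' hii' u hu v hv
    simp only [List.mem_ofFn] at hu hv
    obtain ⟨k, rfl⟩ := hu
    obtain ⟨k', rfl⟩ := hv
    simp [hii']
  · simp [List.mem_ofFn]
  · rintro (j | ⟨i, k⟩)
    · exact Or.inr ⟨j, rfl⟩
    · exact Or.inl ⟨i, by simp [List.mem_ofFn]⟩
  · intro i j
    have hjL : (j : ℕ) * L + a < N * L :=
      calc (j : ℕ) * L + a < (j + 1) * L := by rw [Nat.succ_mul]; omega
        _ ≤ N * L := Nat.mul_le_mul_right L j.2
    obtain ⟨hdiv, hmod⟩ := Nat.div_mod_of_mem_block (L := L) (j := j) (le_add_right le_rfl)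
      (by omega : (j : ℕ) * L + a < j * L + L)
    refine ⟨.inr (i, ⟨_, hjL⟩), by simp [List.mem_ofFn], ?_⟩
    simp only [arrayGraph_adj_inl_inr, hdiv, hmod, true_and]
    simpa using ha
  · intro i j hj k k' hk hk'
    simp only [List.get_ofFn, Fin.cast, arrayGraph_adj_inl_inr] at hk hk'
    exact Nat.lt_of_div_lt_div (c := L) (by omega)

def InArrayWindow (L s : ℕ) : Fin N ⊕ (Fin N × Fin (N * L)) → Prop
  | .inl j => (j : ℕ) * L = s
  | .inr (_, k) => s ≤ k ∧ (k : ℕ) < s + L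

/-- Walks shorter than `c` cannot get from one neck to another, since each neck only sees
positions at distance at least `c` from the ends of its block. -/
lemma arrayGraph_walk_to_inl {c : ℕ} (hA : ∀ a ∈ A, c ≤ a ∧ a + c < L) {j : Fin N}
    {u v : Fin N ⊕ (Fin N × Fin (N * L))} (p : (arrayGraph N L A).Walk u v) (hv : v = .inl j)
    (hp : p.length < c) :
    u = .inl j ∨ ∃ i k, u = .inr (i, k) ∧
      (j : ℕ) * L + c ≤ k + p.length ∧ (k : ℕ) + c < j * L + L + p.length := by
  induction p with
  | nil => exact Or.inl hv
  | @cons u b v h q ih =>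
    rw [Walk.length_cons] at hp ⊢
    rcases ih hv (by omega) with rfl | ⟨i, k, rfl, hk₁, hk₂⟩ <;> rcases u with j' | ⟨i', k'⟩
    · exact h.elim
    · obtain ⟨hdiv, hmod⟩ := h
      have := hA _ hmod
      have := Nat.div_add_mod k' L
      rw [hdiv, Nat.mul_comm] at this
      exact Or.inr ⟨i', k', rfl, by omega, by omega⟩
    · obtain ⟨hdiv, -⟩ := h
      have hj := (Nat.div_mod_of_mem_block (L := L) (j := j) (k := k) (by omega) (by omega)).1
      exact Or.inl (congrArg _ (Fin.ext (hdiv.symm.trans hj)))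
    · obtain ⟨rfl, h⟩ := h
      exact Or.inr ⟨i', k', rfl, by omega, by omega⟩

lemma inArrayWindow_of_walk_to_inl {c : ℕ} (hA : ∀ a ∈ A, c ≤ a ∧ a + c < L) {j : Fin N}
    {u v : Fin N ⊕ (Fin N × Fin (N * L))} (p : (arrayGraph N L A).Walk u v) (hv : v = .inl j)
    (hp : p.length < c) : InArrayWindow L (j * L) u := by
  rcases arrayGraph_walk_to_inl hA p hv hp with rfl | ⟨i, k, rfl, h₁, h₂⟩
  · rfl
  · exact ⟨by omega, by omega⟩

lemma arrayGraph_walk_to_inr {i : Fin N} {k : Fin (N * L)}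
    {u v : Fin N ⊕ (Fin N × Fin (N * L))} (p : (arrayGraph N L A).Walk u v)
    (hv : v = .inr (i, k)) (hp : ∀ w ∈ p.support, w.isRight) :
    ∃ k' : Fin (N * L), u = .inr (i, k') ∧ (k' : ℕ) ≤ k + p.length ∧ (k : ℕ) ≤ k' + p.length := by
  induction p with
  | nil => exact ⟨k, hv, by simp, by simp⟩
  | @cons u b v h q ih =>
    rw [Walk.support_cons, List.forall_mem_cons] at hp
    rw [Walk.length_cons]
    obtain ⟨k'', rfl, h₁, h₂⟩ := ih hv hp.2
    rcases u with j' | ⟨i', k'⟩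
    · exact absurd hp.1 (by simp)
    · obtain ⟨rfl, h⟩ := h
      exact ⟨k', rfl, by omega, by omega⟩

lemma exists_inArrayWindow_of_reachable {W : Type} [Fintype W] {H : SimpleGraph W}
    (φ : H ↪g arrayGraph N L A) {c : ℕ} (hcard : Fintype.card W ≤ c)
    (hA : ∀ a ∈ A, c ≤ a ∧ a + c < L) (hcL : 2 * c < L) (w : W) :
    ∃ s, ∀ v, H.Reachable v w → InArrayWindow L s (φ v) := by
  classical
  have short {u v : W} (h : H.Reachable u v) : ∃ p : H.Walk u v, p.length < c :=
    let ⟨p, hp, _⟩ := h.exists_path_of_dist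
    ⟨p, hp.length_lt.trans_le hcard⟩
  by_cases hneck : ∃ v₀ j, H.Reachable v₀ w ∧ φ v₀ = .inl j
  · obtain ⟨v₀, j, hv₀, hφ⟩ := hneck
    refine ⟨j * L, fun v hv => ?_⟩
    obtain ⟨p, hp⟩ := short (hv.trans hv₀.symm)
    exact inArrayWindow_of_walk_to_inl hA (p.map φ.toHom) hφ (by simpa using hp)
  · push Not at hneck
    obtain ⟨i, k, hw⟩ : ∃ i k, φ w = .inr (i, k) := by
      rcases hφw : φ w with j | ⟨i, k⟩
      exacts [absurd hφw (hneck w j .rfl), ⟨i, k, rfl⟩]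
    -- without necks the component stays on the path of `w`, within distance `c - 1` of it
    refine ⟨k - (c - 1), fun v hv => ?_⟩
    obtain ⟨p, hp⟩ := short hv
    have hright : ∀ u ∈ (p.map φ.toHom).support, u.isRight := by
      simp only [Walk.support_map, List.mem_map]
      rintro _ ⟨u, hu, rfl⟩
      rcases hφu : φ u with j | _
      exacts [absurd hφu (hneck u j ⟨p.dropUntil u hu⟩), rfl]
    obtain ⟨k', hv', h₁, h₂⟩ := arrayGraph_walk_to_inr (p.map φ.toHom) hw hright
    rw [Walk.length_map] at h₁ h₂
    change φ v = _ at hv'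
    rw [hv']
    exact ⟨by omega, by omega⟩

end arrayGraph

lemma containsInduced_induce_of_injOn {V W X : Type} {G : SimpleGraph V} {K : SimpleGraph W}
    {H : SimpleGraph X} (φ : H ↪g K) {g : W → V} {U : Set W} (hinj : Set.InjOn g U)
    (hadj : ∀ a ∈ U, ∀ b ∈ U, K.Adj a b ↔ G.Adj (g a) (g b)) {S : Set X}
    (hS : ∀ a ∈ S, φ a ∈ U) : ContainsInduced G (H.induce S) :=
  ⟨fun a => g (φ a), fun a b h => Subtype.ext (φ.injective (hinj (hS _ a.2) (hS _ b.2) h)),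
    fun a b => φ.map_adj_iff.symm.trans (hadj _ (hS _ a.2) _ (hS _ b.2))⟩

section tassel

variable {V : Type} {T : SimpleGraph V} {x : V} {m N L s : ℕ} {A : Finset ℕ}
  {P : Fin m → List V}

def strandMap (x : V) (P : Fin m → List V) (hNm : N ≤ m) (L s : ℕ) :
    Fin N ⊕ (Fin N × Fin (N * L)) → V
  | .inl _ => x
  | .inr (i, k) => (P (Fin.castLE hNm i)).getD (k - s) x

lemma strandMap_inr (hNm : N ≤ m) (hlen : ∀ j, (P j).length = L) {i : Fin N}
    {k : Fin (N * L)} (hk : s ≤ k ∧ k < s + L) :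
    strandMap x P hNm L s (.inr (i, k)) =
      (P (Fin.castLE hNm i)).get ⟨k - s, by rw [hlen]; exact Nat.sub_lt_left_of_lt_add hk.1 hk.2⟩ :=
  List.getD_eq_getElem _ _ _

lemma strandMap_adj_inl_inr (hNm : N ≤ m) (hlen : ∀ j, (P j).length = L)
    (hPx : ∀ j, ∀ i : Fin (P j).length, T.Adj x ((P j).get i) ↔ (i : ℕ) ∈ A) {j i : Fin N}
    {k : Fin (N * L)} (hj : InArrayWindow L s (.inl j)) (hk : InArrayWindow L s (.inr (i, k))) :
    (arrayGraph N L A).Adj (.inl j) (.inr (i, k)) ↔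
      T.Adj (strandMap x P hNm L s (.inl j)) (strandMap x P hNm L s (.inr (i, k))) := by
  subst hj
  obtain ⟨hdiv, hmod⟩ := Nat.div_mod_of_mem_block hk.1 hk.2
  rw [arrayGraph_adj_inl_inr, hdiv, hmod, strandMap_inr hNm hlen hk]
  change _ ↔ T.Adj x _
  rw [hPx]
  exact and_iff_right rfl

variable (hP : ∀ j, (P j).length = L ∧ IsPathList T (P j) ∧ x ∉ P j)
  (hPP : ∀ j j', j ≠ j' → ∀ u ∈ P j, ∀ v ∈ P j', u ≠ v ∧ ¬ T.Adj u v)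
include hP hPP

lemma strandMap_injOn (hL : 0 < L) (hNm : N ≤ m) :
    Set.InjOn (strandMap x P hNm L s) {u | InArrayWindow L s u} := by
  have hlen j := (hP j).1
  rintro (j | ⟨i, k⟩) hu (j' | ⟨i', k'⟩) hu' heq
  · exact congrArg _ (Fin.ext (Nat.eq_of_mul_eq_mul_right hL (hu.trans hu'.symm)))
  · rw [strandMap_inr hNm hlen hu'] at heq
    exact absurd (heq ▸ List.get_mem _ _) (hP _).2.2
  · rw [strandMap_inr hNm hlen hu] at heq
    exact absurd (heq ▸ List.get_mem _ _) (hP _).2.2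
  · rw [strandMap_inr hNm hlen hu, strandMap_inr hNm hlen hu'] at heq
    obtain rfl | hii' := eq_or_ne i i'
    · have := congrArg Fin.val ((hP _).2.1.2.1.get_inj_iff.mp heq)
      simp only [Set.mem_ofPred_eq, InArrayWindow] at hu hu' this
      exact congrArg _ (congrArg _ (Fin.ext (by omega)))
    · exact absurd heq (hPP _ _ ((Fin.castLE_injective hNm).ne hii') _ (List.get_mem _ _) _
        (List.get_mem _ _)).1

lemma strandMap_adj_iff (hNm : N ≤ m)
    (hPx : ∀ j, ∀ i : Fin (P j).length, T.Adj x ((P j).get i) ↔ (i : ℕ) ∈ A)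
    {u v : Fin N ⊕ (Fin N × Fin (N * L))} (hu : InArrayWindow L s u) (hv : InArrayWindow L s v) :
    (arrayGraph N L A).Adj u v ↔ T.Adj (strandMap x P hNm L s u) (strandMap x P hNm L s v) := by
  have hlen j := (hP j).1
  rcases u with j | ⟨i, k⟩ <;> rcases v with j' | ⟨i', k'⟩
  · exact iff_of_false (arrayGraph_adj_inl_inl _ _) (T.irrefl)
  · exact strandMap_adj_inl_inr hNm hlen hPx hu hv
  · rw [adj_comm, T.adj_comm]
    exact strandMap_adj_inl_inr hNm hlen hPx hv hu
  · rw [arrayGraph_adj_inr_inr, strandMap_inr hNm hlen hu, strandMap_inr hNm hlen hv]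
    obtain rfl | hii' := eq_or_ne i i'
    · rw [(hP _).2.1.2.2]
      simp only [InArrayWindow, true_and] at hu hv ⊢
      omega
    · exact iff_of_false (fun h => hii' h.1) (hPP _ _ ((Fin.castLE_injective hNm).ne hii') _
        (List.get_mem _ _) _ (List.get_mem _ _)).2

end tassel

theorem stmt10_general (n₀ : ℕ)
    (ι : Type) [Fintype ι] (Wt : ι → Type) [∀ i, Fintype (Wt i)]
    (H : ∀ i, SimpleGraph (Wt i))
    (hfree : ∀ n, n₀ ≤ n → ∀ (V : Type) (A : SimpleGraph V), IsNArray A n →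
      ∃ i, ContainsInduced A (H i)) :
    ∀ (V : Type) (T : SimpleGraph V),
      IsTasselGraph T (max n₀ (∑ i, Fintype.card (Wt i))) →
      ∃ i, ∀ w : Wt i,
        ContainsInduced T ((H i).induce {v | (H i).Reachable v w}) := by
  rintro V T ⟨x, m, n, A, P, hcm, ⟨a, ha⟩, hA, hP, hPP, hPx, -⟩
  set c := max n₀ (∑ i, Fintype.card (Wt i))
  have hac := hA a ha
  obtain ⟨i, f, hf, hfadj⟩ :=
    hfree n₀ le_rfl _ _ (arrayGraph_isNArray (N := n₀) ha (by omega : a < n))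
  let φ : H i ↪g arrayGraph n₀ n A := ⟨⟨f, hf⟩, (hfadj _ _).symm⟩
  have hcard : Fintype.card (Wt i) ≤ c :=
    (Finset.single_le_sum (f := fun j => Fintype.card (Wt j)) (fun j _ => Nat.zero_le _)
      (Finset.mem_univ i)).trans (le_max_right _ _)
  have hn₀m : n₀ ≤ m := (le_max_left _ _).trans hcm
  refine ⟨i, fun w => ?_⟩
  obtain ⟨s, hs⟩ := exists_inArrayWindow_of_reachable φ hcard hA (by omega) w
  exact containsInduced_induce_of_injOn φ (strandMap_injOn hP hPP (by omega) hn₀m)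
    (fun _ hu _ hv => strandMap_adj_iff hP hPP hn₀m hPx hu hv) hs

theorem stmt10 (n₀ : ℕ) (hn₀ : 0 < n₀)
    (ι : Type) [Fintype ι] (Wt : ι → Type) [∀ i, Fintype (Wt i)]
    (H : ∀ i, SimpleGraph (Wt i))
    (hfree : ∀ n, n₀ ≤ n → ∀ (V : Type) (A : SimpleGraph V), IsNArray A n →
      ∃ i, ContainsInduced A (H i)) :
    ∀ (V : Type) (T : SimpleGraph V),
      IsTasselGraph T (max n₀ (∑ i, Fintype.card (Wt i))) →
      ∃ i, ∀ w : Wt i,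
        ContainsInduced T ((H i).induce {v | (H i).Reachable v w}) :=
  stmt10_general n₀ ι Wt H hfree
end

section
/- The infinite language S = {0 1^k 0 : k ≥ 1} is 1-unavoidable (every 1-padded binary string contains 0 1^k 0 for some k ≥ 1 as a consecutive substring), but no proper subset of S is c-unavoidable for any c: for every k ≥ 1, the string 0^c 1^k 0^c avoids S \ {0 1^k 0}. -/
/-- A binary string is `c`-padded if it begins and ends with at least `c`
zeros but is not the all-zero string. -/
def CPadded (c : ℕ) (s : List Bool) : Prop :=
  List.replicate c false <+: s ∧ List.replicate c false <:+ s ∧ true ∈ s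



private lemma getElem_w (j i : ℕ) (hi : i < ([false] ++ List.replicate j true ++ [false]).length) :
    ([false] ++ List.replicate j true ++ [false])[i] = decide (1 ≤ i ∧ i < j + 1) := by
  simp only [List.length_append, List.length_replicate, List.length_cons, List.length_nil] at hi
  rcases Nat.lt_or_ge i (1+j) with h1 | h1
  · rw [List.getElem_append_left (by simp; omega)]
    rcases Nat.lt_or_ge i 1 with h2 | h2
    · interval_cases i
      simp
    · rw [List.getElem_append_right (by simpa using h2), List.getElem_replicate]
      simp; omega
  · rw [List.getElem_append_right (by simp; omega)]
    simp; omega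

private lemma getElem_w2 (c k i : ℕ)
    (hi : i < (List.replicate c false ++ List.replicate k true ++ List.replicate c false).length) :
    (List.replicate c false ++ List.replicate k true ++ List.replicate c false)[i]
      = decide (c ≤ i ∧ i < c + k) := by
  simp only [List.length_append, List.length_replicate] at hi
  rcases Nat.lt_or_ge i (c+k) with h1 | h1
  · rw [List.getElem_append_left (by simp; omega)]
    rcases Nat.lt_or_ge i c with h2 | h2
    · rw [List.getElem_append_left (by simpa using h2), List.getElem_replicate]
      simp; omega
    · rw [List.getElem_append_right (by simpa using h2), List.getElem_replicate]
      simp; omega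
  · rw [List.getElem_append_right (by simp; omega), List.getElem_replicate]
    simp; omega

private lemma idx_congr (s : List Bool) (a b : ℕ) (h : a = b) (ha : a < s.length) :
    s[a] = s[b]'(h ▸ ha) := by subst h; rfl

private lemma infix_of_indices (s : List Bool) (p k : ℕ) (hlen : p + k + 2 ≤ s.length)
    (h0 : s[p]'(by omega) = false)
    (h1 : ∀ t (ht : t < k), s[p+1+t]'(by omega) = true)
    (h2 : s[p+k+1]'(by omega) = false) :
    ([false] ++ List.replicate k true ++ [false]) <:+: s := by
  have heq : ([false] ++ List.replicate k true ++ [false]) = (s.drop p).take (k+2) := by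
    apply List.ext_getElem
    · simp; omega
    · intro n hn1 hn2
      rw [List.getElem_take, List.getElem_drop, getElem_w k n hn1]
      simp only [List.length_append, List.length_replicate, List.length_cons,
        List.length_nil] at hn1
      rcases Nat.lt_or_ge n 1 with hc | hc
      · interval_cases n
        rw [idx_congr s (p+0) p (by omega) (by omega), h0]
        simp
      · rcases Nat.lt_or_ge n (k+1) with hd | hd
        · rw [idx_congr s (p+n) (p+1+(n-1)) (by omega) (by omega), h1 (n-1) (by omega)]
          simp; omega
        · have : n = k + 1 := by omega
          subst this
          rw [idx_congr s (p+(k+1)) (p+k+1) (by omega) (by omega), h2]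
          simp
  rw [heq]
  exact (List.take_prefix _ _).isInfix.trans (List.drop_suffix _ _).isInfix

/-- The language `{0 1^k 0 : k ≥ 1}` is `1`-unavoidable, but no proper subset
of it is `c`-unavoidable for any `c`: for each `k ≥ 1` the `c`-padded string
`0^c 1^k 0^c` avoids every `0 1^j 0` with `j ≠ k` (each such word is its own
reverse). -/
theorem stmt15 :
    (∀ s : List Bool, CPadded 1 s →
      ∃ k, 1 ≤ k ∧ ([false] ++ List.replicate k true ++ [false]) <:+: s) ∧
    (∀ c k : ℕ, 0 < c → 1 ≤ k →
      CPadded c (List.replicate c false ++ List.replicate k true ++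
        List.replicate c false) ∧
      ∀ j, 1 ≤ j → j ≠ k →
        ¬ ([false] ++ List.replicate j true ++ [false]) <:+:
            (List.replicate c false ++ List.replicate k true ++
              List.replicate c false) ∧
        ¬ ([false] ++ List.replicate j true ++ [false]).reverse <:+:
            (List.replicate c false ++ List.replicate k true ++
              List.replicate c false)) := by
  constructor
  · rintro s ⟨hpre, hsuf, htrue⟩
    -- first index with true
    obtain ⟨i, hi, hival⟩ := List.mem_iff_getElem.1 htrue
    have hP : ∃ m, ∃ h : m < s.length, s[m] = true := ⟨i, hi, hival⟩
    classical
    obtain ⟨i0, ⟨hi0len, hi0val⟩, hi0min⟩ := Nat.findX (p := fun m => ∃ h : m < s.length, s[m] = true) hP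
    -- s[0] = false
    obtain ⟨t, ht⟩ := hpre
    have h0len : 0 < s.length := by omega
    have h0 : s[0]'h0len = false := by
      subst ht; simp
    have hi0pos : 0 < i0 := by
      rcases Nat.eq_zero_or_pos i0 with h | h
      · exfalso
        rw [idx_congr s i0 0 h hi0len, h0] at hi0val
        simp at hi0val
      · exact h
    -- last element false
    obtain ⟨u, hu⟩ := hsuf
    have hlastlen : s.length - 1 < s.length := by omega
    have hlast : s[s.length - 1]'hlastlen = false := by
      subst hu
      have : u.length + 1 - 1 = u.length := by simp
      rw [List.getElem_append_right (by simp)]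
      simp
    have hi0lt : i0 < s.length - 1 := by
      rcases Nat.lt_or_ge i0 (s.length - 1) with h | h
      · exact h
      · exfalso
        have hEq : i0 = s.length - 1 := by omega
        rw [idx_congr s i0 (s.length - 1) hEq hi0len, hlast] at hi0val
        simp at hi0val
    -- next false after i0
    have hQ : ∃ d, ∃ h : i0 + 1 + d < s.length, s[i0+1+d] = false := by
      refine ⟨s.length - 1 - (i0+1), by omega, ?_⟩
      rw [idx_congr s (i0+1+(s.length-1-(i0+1))) (s.length-1) (by omega) (by omega)]
      exact hlast
    obtain ⟨d0, ⟨hd0len, hd0val⟩, hd0min⟩ :=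
      Nat.findX (p := fun d => ∃ h : i0 + 1 + d < s.length, s[i0+1+d] = false) hQ
    refine ⟨d0 + 1, by omega, infix_of_indices s (i0-1) (d0+1) (by omega) ?_ ?_ ?_⟩
    · have hne : ¬ (s[i0-1]'(by omega) = true) := fun hv =>
        hi0min (i0-1) (by omega) ⟨by omega, hv⟩
      simpa using hne
    · intro t ht
      rcases Nat.eq_zero_or_pos t with h | h
      · subst h
        rw [idx_congr s (i0-1+1+0) i0 (by omega) (by omega)]
        exact hi0val
      · rw [idx_congr s (i0-1+1+t) (i0+1+(t-1)) (by omega) (by omega)]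
        have hne : ¬ (s[i0+1+(t-1)]'(by omega) = false) := fun hv =>
          hd0min (t-1) (by omega) ⟨by omega, hv⟩
        simpa using hne
    · rw [idx_congr s (i0-1+(d0+1)+1) (i0+1+d0) (by omega) (by omega)]
      exact hd0val
  · intro c k hc hk
    have hrev : ∀ j : ℕ, ([false] ++ List.replicate j true ++ [false]).reverse
        = [false] ++ List.replicate j true ++ [false] := by
      intro j
      simp [List.reverse_append, List.reverse_replicate, List.append_assoc]
    have main : ∀ j, 1 ≤ j → j ≠ k →
        ¬ ([false] ++ List.replicate j true ++ [false]) <:+: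
          (List.replicate c false ++ List.replicate k true ++ List.replicate c false) := by
      intro j hj hjk
      rintro ⟨l, r, hlr⟩
      set w := List.replicate c false ++ List.replicate k true ++ List.replicate c false with hwdef
      have hwlen : w.length = c + k + c := by simp [hwdef]; omega
      have hL : l.length + (j + 2) + r.length = c + k + c := by
        have := congrArg List.length hlr
        simp [hwdef] at this ⊢
        omega
      have key : ∀ i, i < j + 2 → ((c ≤ l.length + i ∧ l.length + i < c + k) ↔ (1 ≤ i ∧ i < j + 1)) := by
        intro i hi
        have hlt : l.length + i < w.length := by omega
        have h1 : w[l.length + i]'hlt = decide (1 ≤ i ∧ i < j + 1) := by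
          rw [← List.getElem_of_eq hlr (by simp; omega)]
          rw [List.getElem_append_left (by simp; omega)]
          rw [List.getElem_append_right (by omega)]
          rw [idx_congr _ (l.length + i - l.length) i (by omega) (by simp; omega)]
          exact getElem_w j i (by simp; omega)
        rw [getElem_w2 c k (l.length + i) (by rw [← hwdef] at *; omega)] at h1
        constructor
        · intro hh
          have := (decide_eq_true hh).symm.trans h1
          exact of_decide_eq_true this.symm
        · intro hh
          have := h1.trans (decide_eq_true hh)
          exact of_decide_eq_true this
      have k0 := key 0 (by omega)
      have k1 := key 1 (by omega)
      have kj := key j (by omega)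
      have kj1 := key (j+1) (by omega)
      simp only [iff_iff_implies_and_implies] at k0 k1 kj kj1
      omega
    refine ⟨⟨?_, ?_, ?_⟩, fun j hj hjk => ⟨main j hj hjk, by rw [hrev]; exact main j hj hjk⟩⟩
    · exact ⟨List.replicate k true ++ List.replicate c false, by simp [List.append_assoc]⟩
    · exact ⟨List.replicate c false ++ List.replicate k true, rfl⟩
    · have : true ∈ List.replicate k true := by
        rw [List.mem_replicate]; exact ⟨by omega, rfl⟩
      simp [this]
end
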